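/- Let S be a polygraph and C = S* the free ω-category it generates. Then the triple (E(C), o, ξ), where E(C) = E(S)* is the free ω-category on the polygraph E(S) with its canonical origin o and expansion ξ, together with the inclusion ι : C → E(C), exhibits E(C) as the value at C of the left adjoint to the forgetful functor U : Exp → ωCat; that is, for every ω-category with expansion (D, o, ξ) and every ω-functor f : C → D, there is a unique morphism f̂ : (E(C), o, ξ) → (D, o, ξ) in Exp with f̂ ∘ ι = f. Consequently the expansion monad T = U∘F takes S* to E(S)*. -/

import Mathlib

/-! Formalization of notions from "Orientals as free algebras" (Ara–Lafont–Métayer),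
following Burroni's expansion monad construction. Strict ω-categories are encoded
as a single set of cells with a dimension function, together with (total) source,
target, composition and unit operations, whose axioms are required to hold on the
appropriate domains of definition. -/

noncomputable section

namespace Orientals

open CategoryTheory

universe u v w

/-- The underlying data of a strict ω-category. `comp p x y` denotes the
`p`-composition `x ∘_p y` ("x after y"), meaningful when `p < dim x = dim y`
and the iterated `p`-source of `x` equals the iterated `p`-target of `y`. -/
structure PreOmegaCat : Type (u + 1) where
  Cell : Type u
  dim : Cell → ℕ
  src : Cell → Cell
  tgt : Cell → Cell
  comp : ℕ → Cell → Cell → Cell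
  unit : Cell → Cell

namespace PreOmegaCat

variable (C : PreOmegaCat.{u})

/-- Iterated source, down to dimension `p`. -/
def srcI (p : ℕ) (x : C.Cell) : C.Cell := C.src^[C.dim x - p] x

/-- Iterated target, down to dimension `p`. -/
def tgtI (p : ℕ) (x : C.Cell) : C.Cell := C.tgt^[C.dim x - p] x

/-- `x ∘_p y` is defined when `p < dim x = dim y` and `s_p x = t_p y`. -/
abbrev Composable (p : ℕ) (x y : C.Cell) : Prop :=
  p < C.dim x ∧ C.dim y = C.dim x ∧ C.srcI p x = C.tgtI p y

/-- Pad a cell with iterated units up to dimension `m`. -/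
def pad (m : ℕ) (x : C.Cell) : C.Cell := C.unit^[m - C.dim x] x

/-- Composition of two cells of possibly different dimensions, the lower
dimensional one being padded with units (the abbreviation `x ∘_q u` of the paper). -/
def mcomp (p : ℕ) (x y : C.Cell) : C.Cell :=
  C.comp p (C.pad (max (C.dim x) (C.dim y)) x) (C.pad (max (C.dim x) (C.dim y)) y)

end PreOmegaCat

namespace PreOmegaCat

/-- `foldComp b s k = b ∘_0 s 0 ∘_1 s 1 ∘_2 ⋯ ∘_{k-1} s (k-1)`, parenthesized
with priority to the lowest dimensional compositions (i.e. left-nested). -/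
def foldComp (C : PreOmegaCat.{u}) (b : C.Cell) (s : ℕ → C.Cell) : ℕ → C.Cell
  | 0 => b
  | k + 1 => C.mcomp k (foldComp C b s k) (s k)

end PreOmegaCat

/-- A strict ω-category: the data of a `PreOmegaCat` satisfying the globularity,
associativity, unit, interchange and functoriality-of-units laws on their domains
of definition. By convention, source and target fix the `0`-cells. -/
structure OmegaCat extends PreOmegaCat.{u} : Type (u + 1) where
  dim_src : ∀ x, dim x ≠ 0 → dim (src x) = dim x - 1
  dim_tgt : ∀ x, dim x ≠ 0 → dim (tgt x) = dim x - 1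
  src_dim0 : ∀ x, dim x = 0 → src x = x
  tgt_dim0 : ∀ x, dim x = 0 → tgt x = x
  glob_ss : ∀ x, 2 ≤ dim x → src (src x) = src (tgt x)
  glob_tt : ∀ x, 2 ≤ dim x → tgt (src x) = tgt (tgt x)
  dim_unit : ∀ x, dim (unit x) = dim x + 1
  src_unit : ∀ x, src (unit x) = x
  tgt_unit : ∀ x, tgt (unit x) = x
  dim_comp : ∀ p x y, toPreOmegaCat.Composable p x y → dim (comp p x y) = dim x
  src_comp_top : ∀ p x y, toPreOmegaCat.Composable p x y → dim x = p + 1 →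
    src (comp p x y) = src y
  tgt_comp_top : ∀ p x y, toPreOmegaCat.Composable p x y → dim x = p + 1 →
    tgt (comp p x y) = tgt x
  src_comp : ∀ p x y, toPreOmegaCat.Composable p x y → p + 1 < dim x →
    src (comp p x y) = comp p (src x) (src y)
  tgt_comp : ∀ p x y, toPreOmegaCat.Composable p x y → p + 1 < dim x →
    tgt (comp p x y) = comp p (tgt x) (tgt y)
  comp_assoc : ∀ p x y z, toPreOmegaCat.Composable p x y →
    toPreOmegaCat.Composable p y z →
    comp p (comp p x y) z = comp p x (comp p y z)
  comp_unit_src : ∀ p x, p < dim x →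
    comp p x (unit^[dim x - p] (toPreOmegaCat.srcI p x)) = x
  comp_unit_tgt : ∀ p x, p < dim x →
    comp p (unit^[dim x - p] (toPreOmegaCat.tgtI p x)) x = x
  interchange : ∀ p q x y x' y', q < p →
    toPreOmegaCat.Composable p x y → toPreOmegaCat.Composable p x' y' →
    toPreOmegaCat.Composable q x x' → toPreOmegaCat.Composable q y y' →
    comp q (comp p x y) (comp p x' y') = comp p (comp q x x') (comp q y y')
  unit_comp : ∀ p x y, toPreOmegaCat.Composable p x y →
    unit (comp p x y) = comp p (unit x) (unit y)

/-- A (strict) ω-functor: a map of cells preserving dimension, sources, targets,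
the defined compositions, and units. -/
@[ext]
structure OmegaFunctor (C D : OmegaCat.{u}) : Type u where
  map : C.Cell → D.Cell
  map_dim : ∀ x, D.dim (map x) = C.dim x
  map_src : ∀ x, map (C.src x) = D.src (map x)
  map_tgt : ∀ x, map (C.tgt x) = D.tgt (map x)
  map_comp : ∀ p x y, C.Composable p x y →
    map (C.comp p x y) = D.comp p (map x) (map y)
  map_unit : ∀ x, map (C.unit x) = D.unit (map x)

namespace OmegaFunctor

/-- The identity ω-functor. -/
def idF (C : OmegaCat.{u}) : OmegaFunctor C C where
  map := _root_.id
  map_dim _ := rfl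
  map_src _ := rfl
  map_tgt _ := rfl
  map_comp _ _ _ _ := rfl
  map_unit _ := rfl

theorem map_srcI {C D : OmegaCat.{u}} (f : OmegaFunctor C D) (p : ℕ) (x : C.Cell) :
    f.map (C.srcI p x) = D.srcI p (f.map x) := by
  show f.map (C.src^[C.dim x - p] x) = D.src^[D.dim (f.map x) - p] (f.map x)
  rw [f.map_dim]
  exact Function.Semiconj.iterate_right f.map_src (C.dim x - p) x

theorem map_tgtI {C D : OmegaCat.{u}} (f : OmegaFunctor C D) (p : ℕ) (x : C.Cell) :
    f.map (C.tgtI p x) = D.tgtI p (f.map x) := by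
  show f.map (C.tgt^[C.dim x - p] x) = D.tgt^[D.dim (f.map x) - p] (f.map x)
  rw [f.map_dim]
  exact Function.Semiconj.iterate_right f.map_tgt (C.dim x - p) x

theorem map_composable {C D : OmegaCat.{u}} (f : OmegaFunctor C D) {p : ℕ}
    {x y : C.Cell} (h : C.Composable p x y) : D.Composable p (f.map x) (f.map y) := by
  obtain ⟨h1, h2, h3⟩ := h
  refine ⟨?_, ?_, ?_⟩
  · rw [f.map_dim]; exact h1
  · rw [f.map_dim, f.map_dim]; exact h2
  · rw [← f.map_srcI, ← f.map_tgtI, h3]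

/-- Composition of ω-functors. -/
def compF {C D E : OmegaCat.{u}} (f : OmegaFunctor C D) (g : OmegaFunctor D E) :
    OmegaFunctor C E where
  map x := g.map (f.map x)
  map_dim x := by rw [g.map_dim, f.map_dim]
  map_src x := by rw [f.map_src, g.map_src]
  map_tgt x := by rw [f.map_tgt, g.map_tgt]
  map_comp p x y h := by
    rw [f.map_comp p x y h, g.map_comp p _ _ (f.map_composable h)]
  map_unit x := by rw [f.map_unit, g.map_unit]

end OmegaFunctor

/-- The category `ωCat` of strict ω-categories and strict ω-functors. -/
instance : Category.{u, u + 1} OmegaCat.{u} where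
  Hom := OmegaFunctor
  id := OmegaFunctor.idF
  comp := OmegaFunctor.compF
  id_comp f := by apply OmegaFunctor.ext; rfl
  comp_id f := by apply OmegaFunctor.ext; rfl
  assoc f g h := by apply OmegaFunctor.ext; rfl

/-- The underlying cell map of a morphism in `ωCat`. -/
def homMap {C D : OmegaCat.{u}} (f : C ⟶ D) : C.Cell → D.Cell := OmegaFunctor.map f

/-- The empty (initial) ω-category. -/
def emptyOmega : OmegaCat.{u} where
  Cell := PEmpty
  dim x := x.elim
  src x := x.elim
  tgt x := x.elim
  comp _ x _ := x.elim
  unit x := x.elim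
  dim_src x := x.elim
  dim_tgt x := x.elim
  src_dim0 x := x.elim
  tgt_dim0 x := x.elim
  glob_ss x := x.elim
  glob_tt x := x.elim
  dim_unit x := x.elim
  src_unit x := x.elim
  tgt_unit x := x.elim
  dim_comp _ x := x.elim
  src_comp_top _ x := x.elim
  tgt_comp_top _ x := x.elim
  src_comp _ x := x.elim
  tgt_comp _ x := x.elim
  comp_assoc _ x := x.elim
  comp_unit_src _ x := x.elim
  comp_unit_tgt _ x := x.elim
  interchange _ _ x := x.elim
  unit_comp _ x := x.elim

/-- An expansion on an ω-category `C`: an origin `orig` (a `0`-cell) together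
with, for each `n`-cell `x`, an `(n+1)`-cell `xi x` (written `ξ_x` in the paper)
with `ξ_x : orig → x` for `n = 0` and
`ξ_x : ξ_{t x_{n-1}} → x ∘_0 ξ_{s x_0} ∘_1 ⋯ ∘_{n-1} ξ_{s x_{n-1}}` for `n > 0`,
compatible with compositions and units, and degenerate on `orig` and on the
cells `ξ_u`. -/
structure Expansion (C : OmegaCat.{u}) : Type u where
  orig : C.Cell
  dim_orig : C.dim orig = 0
  xi : C.Cell → C.Cell
  dim_xi : ∀ x, C.dim (xi x) = C.dim x + 1
  xi_src0 : ∀ x, C.dim x = 0 → C.src (xi x) = orig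
  xi_src : ∀ x, C.dim x ≠ 0 → C.src (xi x) = xi (C.tgt x)
  xi_tgt : ∀ x, C.tgt (xi x) = C.foldComp x (fun i => xi (C.srcI i x)) (C.dim x)
  xi_comp : ∀ p x y, C.Composable p y x →
    xi (C.comp p y x) =
      C.mcomp (p + 1)
        (C.mcomp p (C.foldComp (C.tgtI (p + 1) y) (fun i => xi (C.srcI i x)) p) (xi x))
        (xi y)
  xi_unit : ∀ u, xi (C.unit u) = C.unit (xi u)
  xi_xi : ∀ u, xi (xi u) = C.unit (xi u)
  xi_orig : xi orig = C.unit orig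

/-- An object of the category `Exp`: an ω-category endowed with an expansion. -/
structure ExpCatObj : Type (u + 1) where
  cat : OmegaCat.{u}
  exp : Expansion cat

/-- A morphism of ω-categories with expansion: an ω-functor preserving the
origin and commuting with the expansions. -/
@[ext]
structure ExpHom (X Y : ExpCatObj.{u}) : Type u where
  func : OmegaFunctor X.cat Y.cat
  map_orig : func.map X.exp.orig = Y.exp.orig
  map_xi : ∀ x, func.map (X.exp.xi x) = Y.exp.xi (func.map x)

/-- The category `Exp` of ω-categories endowed with an expansion. -/
instance : Category.{u, u + 1} ExpCatObj.{u} where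
  Hom := ExpHom
  id X := ⟨OmegaFunctor.idF X.cat, rfl, fun _ => rfl⟩
  comp {X Y Z} f g :=
    ⟨OmegaFunctor.compF f.func g.func,
      by show g.func.map (f.func.map _) = _; rw [f.map_orig, g.map_orig],
      fun x => by show g.func.map (f.func.map _) = _; rw [f.map_xi, g.map_xi]; rfl⟩
  id_comp f := by apply ExpHom.ext; apply OmegaFunctor.ext; rfl
  comp_id f := by apply ExpHom.ext; apply OmegaFunctor.ext; rfl
  assoc f g h := by apply ExpHom.ext; apply OmegaFunctor.ext; rfl

/-- The forgetful functor `U : Exp → ωCat`. -/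
def forgetExp : ExpCatObj.{u} ⥤ OmegaCat.{u} where
  obj X := X.cat
  map f := f.func
  map_id _ := rfl
  map_comp _ _ := rfl

/-- The underlying ω-functor with expansion of a morphism in `Exp`. -/
def expHomOf {X Y : ExpCatObj.{u}} (f : X ⟶ Y) : ExpHom X Y := f

/-- An "`n`-functor" from `C` to the `n`-truncation of `D`: a map of cells whose
structure-preservation properties are only required on cells of dimension `≤ n`
(the values on higher cells being irrelevant). -/
structure PartFunc (C D : OmegaCat.{u}) (n : ℕ) : Type u where
  map : C.Cell → D.Cell
  map_dim : ∀ x, C.dim x ≤ n → D.dim (map x) = C.dim x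
  map_src : ∀ x, C.dim x ≤ n → map (C.src x) = D.src (map x)
  map_tgt : ∀ x, C.dim x ≤ n → map (C.tgt x) = D.tgt (map x)
  map_comp : ∀ p x y, C.dim x ≤ n → C.Composable p x y →
    map (C.comp p x y) = D.comp p (map x) (map y)
  map_unit : ∀ x, C.dim x + 1 ≤ n → map (C.unit x) = D.unit (map x)

/-- `C` is freely generated, in the sense of polygraphs, by the graded set of
cells `gen`: the generators of dimension `n` are exactly `gen n`, the `0`-cells
are exactly the `0`-generators, and for each `n` the universal property of free
extension holds: any `n`-functor to (the `n`-truncation of) an ω-category `D`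
together with a compatible assignment of the `(n+1)`-generators extends,
uniquely on cells of dimension `≤ n + 1`, to an `(n+1)`-functor. -/
def FreelyGeneratedBy (C : OmegaCat.{u}) (gen : ℕ → Set C.Cell) : Prop :=
  (∀ n x, x ∈ gen n → C.dim x = n) ∧
  (∀ x, C.dim x = 0 → x ∈ gen 0) ∧
  ∀ (n : ℕ) (D : OmegaCat.{u}) (f : PartFunc C D n) (e : C.Cell → D.Cell),
    (∀ a ∈ gen (n + 1), D.dim (e a) = n + 1 ∧
        D.src (e a) = f.map (C.src a) ∧ D.tgt (e a) = f.map (C.tgt a)) →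
    (∃ g : PartFunc C D (n + 1),
        (∀ x, C.dim x ≤ n → g.map x = f.map x) ∧ ∀ a ∈ gen (n + 1), g.map a = e a) ∧
    (∀ g g' : PartFunc C D (n + 1),
        ((∀ x, C.dim x ≤ n → g.map x = f.map x) ∧ ∀ a ∈ gen (n + 1), g.map a = e a) →
        ((∀ x, C.dim x ≤ n → g'.map x = f.map x) ∧ ∀ a ∈ gen (n + 1), g'.map a = e a) →
        ∀ x, C.dim x ≤ n + 1 → g.map x = g'.map x)

/-- An ω-category is an `n`-category when all its cells of dimension `> n`
are units. -/
def IsNCat (C : OmegaCat.{u}) (n : ℕ) : Prop :=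
  ∀ x, n < C.dim x → ∃ y, x = C.unit y

/-- The generators of the polygraph `E(S)` of the free expansion: in dimension
`0`, the (images of the) generators of `S` together with the origin; in
dimension `n+1`, the generators of `S` together with the cells `ξ_a = r_a`
for `a` a generator of dimension `n`. -/
def expandedGens (C C' : OmegaCat.{u}) (E : Expansion C') (ι : OmegaFunctor C C')
    (gen : ℕ → Set C.Cell) : ℕ → Set C'.Cell
  | 0 => (ι.map '' gen 0) ∪ {E.orig}
  | n + 1 => (ι.map '' gen (n + 1)) ∪ (E.xi '' (ι.map '' gen n))

/-- The canonical generators of `T C = E(S)*` for `C = S*` free on the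
polygraph `gen`, where `T = U ∘ F` is the expansion monad of an adjunction
`F ⊣ U` : the images under the unit `η : C → T C` of the generators of `S`,
the origin, and the cells `ξ_{η a}`. -/
def genT (F : OmegaCat.{u} ⥤ ExpCatObj.{u}) (adj : F ⊣ forgetExp)
    (C : OmegaCat.{u}) (gen : ℕ → Set C.Cell) :
    ℕ → Set ((F ⋙ forgetExp).obj C).Cell
  | 0 => (homMap (adj.unit.app C) '' gen 0) ∪ {(F.obj C).exp.orig}
  | n + 1 => (homMap (adj.unit.app C) '' gen (n + 1)) ∪
      ((F.obj C).exp.xi '' (homMap (adj.unit.app C) '' gen n))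

/-!
The extension `g : E(S)* → D` of `f` is built one dimension at a time from the universal property
of the polygraph `E(S)`: on the new generators it is forced to be `g (ι a) = f a` and
`g ξ_{ι b} = ξ_{g (ι b)}`, and the expansion equations express `ξ` of a unit or of a composite
through `ξ` of its factors and of their faces, so that compatibility with `ξ` propagates from the
generators to all cells. For this to be well defined the generators `ι a`, `o` and `ξ_{ι b}` of
`E(S)` must be pairwise distinct; this is detected by weightings of `E(S)*` in suspensions of the
monoid `(ℕ, +)`: a generator is never a unit, and `t ξ_{ι b}` has the weight of `ι b` when all the
`ξ_{ι a}` have weight zero. The second assertion is the uniqueness of the initial object of the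
comma category `C ↓ U`.
-/

open OmegaCat

namespace OmegaCat

variable {C : OmegaCat.{u}}

theorem dim_src_le (x : C.Cell) : C.dim (C.src x) ≤ C.dim x := by
  by_cases h : C.dim x = 0
  · rw [C.src_dim0 x h]
  · rw [C.dim_src x h]; omega

theorem dim_tgt_le (x : C.Cell) : C.dim (C.tgt x) ≤ C.dim x := by
  by_cases h : C.dim x = 0
  · rw [C.tgt_dim0 x h]
  · rw [C.dim_tgt x h]; omega

theorem dim_src_iterate_le (k : ℕ) (x : C.Cell) : C.dim (C.src^[k] x) ≤ C.dim x := by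
  induction k generalizing x with
  | zero => rfl
  | succ k ih => exact (ih (C.src x)).trans (dim_src_le x)

theorem dim_tgt_iterate_le (k : ℕ) (x : C.Cell) : C.dim (C.tgt^[k] x) ≤ C.dim x := by
  induction k generalizing x with
  | zero => rfl
  | succ k ih => exact (ih (C.tgt x)).trans (dim_tgt_le x)

theorem dim_src_iterate {k : ℕ} {x : C.Cell} (h : k ≤ C.dim x) :
    C.dim (C.src^[k] x) = C.dim x - k := by
  induction k generalizing x with
  | zero => rfl
  | succ k ih =>
    have h0 : C.dim x ≠ 0 := by omega
    rw [Function.iterate_succ_apply, ih (by rw [C.dim_src x h0]; omega), C.dim_src x h0]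
    omega

theorem dim_tgt_iterate {k : ℕ} {x : C.Cell} (h : k ≤ C.dim x) :
    C.dim (C.tgt^[k] x) = C.dim x - k := by
  induction k generalizing x with
  | zero => rfl
  | succ k ih =>
    have h0 : C.dim x ≠ 0 := by omega
    rw [Function.iterate_succ_apply, ih (by rw [C.dim_tgt x h0]; omega), C.dim_tgt x h0]
    omega

theorem dim_unit_iterate (k : ℕ) (x : C.Cell) : C.dim (C.unit^[k] x) = C.dim x + k := by
  induction k with
  | zero => rfl
  | succ k ih => rw [Function.iterate_succ_apply', C.dim_unit, ih, Nat.add_assoc]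

theorem dim_srcI {p : ℕ} {x : C.Cell} (h : p ≤ C.dim x) : C.dim (C.srcI p x) = p := by
  rw [PreOmegaCat.srcI, dim_src_iterate (by omega)]; omega

theorem dim_tgtI {p : ℕ} {x : C.Cell} (h : p ≤ C.dim x) : C.dim (C.tgtI p x) = p := by
  rw [PreOmegaCat.tgtI, dim_tgt_iterate (by omega)]; omega

theorem srcI_of_dim_le {p : ℕ} {x : C.Cell} (h : C.dim x ≤ p) : C.srcI p x = x := by
  rw [PreOmegaCat.srcI, Nat.sub_eq_zero_of_le h, Function.iterate_zero_apply]

theorem tgtI_of_dim_le {p : ℕ} {x : C.Cell} (h : C.dim x ≤ p) : C.tgtI p x = x := by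
  rw [PreOmegaCat.tgtI, Nat.sub_eq_zero_of_le h, Function.iterate_zero_apply]

theorem srcI_of_dim_eq_succ {p : ℕ} {x : C.Cell} (h : C.dim x = p + 1) :
    C.srcI p x = C.src x := by
  rw [PreOmegaCat.srcI, h, Nat.add_sub_cancel_left, Function.iterate_one]

theorem tgtI_of_dim_eq_succ {p : ℕ} {x : C.Cell} (h : C.dim x = p + 1) :
    C.tgtI p x = C.tgt x := by
  rw [PreOmegaCat.tgtI, h, Nat.add_sub_cancel_left, Function.iterate_one]

theorem srcI_src {p : ℕ} {x : C.Cell} (h : p < C.dim x) :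
    C.srcI p (C.src x) = C.srcI p x := by
  rw [PreOmegaCat.srcI, PreOmegaCat.srcI, C.dim_src x (by omega),
    show C.dim x - p = (C.dim x - 1 - p) + 1 by omega, Function.iterate_succ_apply]

theorem tgtI_tgt {p : ℕ} {x : C.Cell} (h : p < C.dim x) :
    C.tgtI p (C.tgt x) = C.tgtI p x := by
  rw [PreOmegaCat.tgtI, PreOmegaCat.tgtI, C.dim_tgt x (by omega),
    show C.dim x - p = (C.dim x - 1 - p) + 1 by omega, Function.iterate_succ_apply]

theorem srcI_tgt {p : ℕ} {x : C.Cell} (h : p + 2 ≤ C.dim x) :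
    C.srcI p (C.tgt x) = C.srcI p x := by
  rw [PreOmegaCat.srcI, PreOmegaCat.srcI, C.dim_tgt x (by omega),
    show C.dim x - 1 - p = (C.dim x - 2 - p) + 1 by omega,
    show C.dim x - p = (C.dim x - 2 - p) + 1 + 1 by omega,
    Function.iterate_succ_apply, Function.iterate_succ_apply,
    Function.iterate_succ_apply, C.glob_ss x (by omega)]

theorem tgtI_src {p : ℕ} {x : C.Cell} (h : p + 2 ≤ C.dim x) :
    C.tgtI p (C.src x) = C.tgtI p x := by
  rw [PreOmegaCat.tgtI, PreOmegaCat.tgtI, C.dim_src x (by omega),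
    show C.dim x - 1 - p = (C.dim x - 2 - p) + 1 by omega,
    show C.dim x - p = (C.dim x - 2 - p) + 1 + 1 by omega,
    Function.iterate_succ_apply, Function.iterate_succ_apply,
    Function.iterate_succ_apply, C.glob_tt x (by omega)]

theorem srcI_srcI {q p : ℕ} (hqp : q ≤ p) (x : C.Cell) :
    C.srcI q (C.srcI p x) = C.srcI q x := by
  rcases le_or_gt (C.dim x) p with hp | hp
  · rw [srcI_of_dim_le hp]
  · show C.src^[C.dim (C.srcI p x) - q] (C.srcI p x) = C.src^[C.dim x - q] x
    rw [dim_srcI hp.le, PreOmegaCat.srcI, ← Function.iterate_add_apply]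
    congr 1; omega

theorem tgtI_tgtI {q p : ℕ} (hqp : q ≤ p) (x : C.Cell) :
    C.tgtI q (C.tgtI p x) = C.tgtI q x := by
  rcases le_or_gt (C.dim x) p with hp | hp
  · rw [tgtI_of_dim_le hp]
  · show C.tgt^[C.dim (C.tgtI p x) - q] (C.tgtI p x) = C.tgt^[C.dim x - q] x
    rw [dim_tgtI hp.le, PreOmegaCat.tgtI, ← Function.iterate_add_apply]
    congr 1; omega

theorem srcI_tgt_iterate {q : ℕ} (j : ℕ) {x : C.Cell} (h : q + 1 + j ≤ C.dim x) :
    C.srcI q (C.tgt^[j] x) = C.srcI q x := by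
  induction j generalizing x with
  | zero => rfl
  | succ j ih =>
    rw [Function.iterate_succ_apply, ih (by rw [C.dim_tgt x (by omega)]; omega),
      srcI_tgt (by omega)]

theorem tgtI_src_iterate {q : ℕ} (j : ℕ) {x : C.Cell} (h : q + 1 + j ≤ C.dim x) :
    C.tgtI q (C.src^[j] x) = C.tgtI q x := by
  induction j generalizing x with
  | zero => rfl
  | succ j ih =>
    rw [Function.iterate_succ_apply, ih (by rw [C.dim_src x (by omega)]; omega),
      tgtI_src (by omega)]

theorem srcI_tgtI {q p : ℕ} (hqp : q < p) (x : C.Cell) :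
    C.srcI q (C.tgtI p x) = C.srcI q x := by
  rcases le_or_gt (C.dim x) p with hp | hp
  · rw [tgtI_of_dim_le hp]
  · exact srcI_tgt_iterate _ (by omega)

theorem tgtI_srcI {q p : ℕ} (hqp : q < p) (x : C.Cell) :
    C.tgtI q (C.srcI p x) = C.tgtI q x := by
  rcases le_or_gt (C.dim x) p with hp | hp
  · rw [srcI_of_dim_le hp]
  · exact tgtI_src_iterate _ (by omega)

theorem src_iterate_unit_iterate {j k : ℕ} (h : j ≤ k) (x : C.Cell) :
    C.src^[j] (C.unit^[k] x) = C.unit^[k - j] x := by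
  induction j generalizing k with
  | zero => rfl
  | succ j ih =>
    obtain ⟨k, rfl⟩ := Nat.exists_eq_add_of_lt h
    rw [Function.iterate_succ_apply, show j + k + 1 = (j + k) + 1 from rfl,
      Function.iterate_succ_apply', C.src_unit, ih (by omega)]
    congr 1; omega

theorem tgt_iterate_unit_iterate {j k : ℕ} (h : j ≤ k) (x : C.Cell) :
    C.tgt^[j] (C.unit^[k] x) = C.unit^[k - j] x := by
  induction j generalizing k with
  | zero => rfl
  | succ j ih =>
    obtain ⟨k, rfl⟩ := Nat.exists_eq_add_of_lt h
    rw [Function.iterate_succ_apply, show j + k + 1 = (j + k) + 1 from rfl,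
      Function.iterate_succ_apply', C.tgt_unit, ih (by omega)]
    congr 1; omega

theorem srcI_unit_iterate_of_le {p k : ℕ} {x : C.Cell} (h : p ≤ C.dim x) :
    C.srcI p (C.unit^[k] x) = C.srcI p x := by
  rw [PreOmegaCat.srcI, dim_unit_iterate, show C.dim x + k - p = (C.dim x - p) + k by omega,
    Function.iterate_add_apply, src_iterate_unit_iterate le_rfl, Nat.sub_self,
    Function.iterate_zero_apply, PreOmegaCat.srcI]

theorem tgtI_unit_iterate_of_le {p k : ℕ} {x : C.Cell} (h : p ≤ C.dim x) :
    C.tgtI p (C.unit^[k] x) = C.tgtI p x := by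
  rw [PreOmegaCat.tgtI, dim_unit_iterate, show C.dim x + k - p = (C.dim x - p) + k by omega,
    Function.iterate_add_apply, tgt_iterate_unit_iterate le_rfl, Nat.sub_self,
    Function.iterate_zero_apply, PreOmegaCat.tgtI]

theorem srcI_unit_iterate_of_ge {p k : ℕ} {x : C.Cell} (h1 : C.dim x ≤ p)
    (h2 : p ≤ C.dim x + k) : C.srcI p (C.unit^[k] x) = C.unit^[p - C.dim x] x := by
  rw [PreOmegaCat.srcI, dim_unit_iterate, src_iterate_unit_iterate (by omega)]
  congr 1; omega

theorem tgtI_unit_iterate_of_ge {p k : ℕ} {x : C.Cell} (h1 : C.dim x ≤ p)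
    (h2 : p ≤ C.dim x + k) : C.tgtI p (C.unit^[k] x) = C.unit^[p - C.dim x] x := by
  rw [PreOmegaCat.tgtI, dim_unit_iterate, tgt_iterate_unit_iterate (by omega)]
  congr 1; omega

theorem srcI_unit {p : ℕ} {x : C.Cell} (h : p ≤ C.dim x) :
    C.srcI p (C.unit x) = C.srcI p x :=
  srcI_unit_iterate_of_le (k := 1) h

theorem tgtI_unit {p : ℕ} {x : C.Cell} (h : p ≤ C.dim x) :
    C.tgtI p (C.unit x) = C.tgtI p x :=
  tgtI_unit_iterate_of_le (k := 1) h

theorem pad_of_dim_eq {m : ℕ} {x : C.Cell} (h : C.dim x = m) : C.pad m x = x := by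
  rw [PreOmegaCat.pad, h, Nat.sub_self, Function.iterate_zero_apply]

theorem mcomp_of_dim_eq {p : ℕ} {x y : C.Cell} (h : C.dim y = C.dim x) :
    C.mcomp p x y = C.comp p x y := by
  rw [PreOmegaCat.mcomp, h, max_self, pad_of_dim_eq rfl, pad_of_dim_eq h]

theorem mcomp_of_dim_le {p : ℕ} {x y : C.Cell} (h : C.dim y ≤ C.dim x) :
    C.mcomp p x y = C.comp p x (C.unit^[C.dim x - C.dim y] y) := by
  rw [PreOmegaCat.mcomp, max_eq_left h, pad_of_dim_eq rfl, PreOmegaCat.pad]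

theorem mcomp_of_dim_ge {p : ℕ} {x y : C.Cell} (h : C.dim x ≤ C.dim y) :
    C.mcomp p x y = C.comp p (C.unit^[C.dim y - C.dim x] x) y := by
  rw [PreOmegaCat.mcomp, max_eq_right h, pad_of_dim_eq rfl, PreOmegaCat.pad]

theorem composable_src {p : ℕ} {x y : C.Cell} (h : C.Composable p x y)
    (hp : p + 1 < C.dim x) : C.Composable p (C.src x) (C.src y) := by
  obtain ⟨h1, hd, hst⟩ := h
  refine ⟨by rw [C.dim_src x (by omega)]; omega,
    by rw [C.dim_src x (by omega), C.dim_src y (by omega), hd], ?_⟩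
  rw [srcI_src (by omega), tgtI_src (by omega), hst]

theorem composable_tgt {p : ℕ} {x y : C.Cell} (h : C.Composable p x y)
    (hp : p + 1 < C.dim x) : C.Composable p (C.tgt x) (C.tgt y) := by
  obtain ⟨h1, hd, hst⟩ := h
  refine ⟨by rw [C.dim_tgt x (by omega)]; omega,
    by rw [C.dim_tgt x (by omega), C.dim_tgt y (by omega), hd], ?_⟩
  rw [srcI_tgt (by omega), tgtI_tgt (by omega), hst]

theorem composable_srcI {p q : ℕ} {x y : C.Cell} (h : C.Composable p x y) (hq : p < q) :
    C.Composable p (C.srcI q x) (C.srcI q y) := by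
  obtain ⟨h1, hd, hst⟩ := h
  refine ⟨?_, ?_, ?_⟩
  · rcases le_or_gt (C.dim x) q with h' | h'
    · rwa [srcI_of_dim_le h']
    · rwa [dim_srcI h'.le]
  · rcases le_or_gt (C.dim x) q with h' | h'
    · rw [srcI_of_dim_le h', srcI_of_dim_le (hd ▸ h'), hd]
    · rw [dim_srcI h'.le, dim_srcI (hd ▸ h'.le)]
  · rw [srcI_srcI hq.le, tgtI_srcI hq, hst]

theorem composable_tgtI {p q : ℕ} {x y : C.Cell} (h : C.Composable p x y) (hq : p < q) :
    C.Composable p (C.tgtI q x) (C.tgtI q y) := by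
  obtain ⟨h1, hd, hst⟩ := h
  refine ⟨?_, ?_, ?_⟩
  · rcases le_or_gt (C.dim x) q with h' | h'
    · rwa [tgtI_of_dim_le h']
    · rwa [dim_tgtI h'.le]
  · rcases le_or_gt (C.dim x) q with h' | h'
    · rw [tgtI_of_dim_le h', tgtI_of_dim_le (hd ▸ h'), hd]
    · rw [dim_tgtI h'.le, dim_tgtI (hd ▸ h'.le)]
  · rw [srcI_tgtI hq, tgtI_tgtI hq.le, hst]

theorem src_iterate_comp {p k : ℕ} {x y : C.Cell} (h : C.Composable p x y)
    (hk : p + k < C.dim x) :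
    C.src^[k] (C.comp p x y) = C.comp p (C.src^[k] x) (C.src^[k] y) := by
  induction k generalizing x y with
  | zero => rfl
  | succ k ih =>
    rw [Function.iterate_succ_apply, C.src_comp p x y h (by omega),
      ih (composable_src h (by omega)) (by rw [C.dim_src x (by omega)]; omega)]
    rfl

theorem tgt_iterate_comp {p k : ℕ} {x y : C.Cell} (h : C.Composable p x y)
    (hk : p + k < C.dim x) :
    C.tgt^[k] (C.comp p x y) = C.comp p (C.tgt^[k] x) (C.tgt^[k] y) := by
  induction k generalizing x y with
  | zero => rfl
  | succ k ih =>
    rw [Function.iterate_succ_apply, C.tgt_comp p x y h (by omega),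
      ih (composable_tgt h (by omega)) (by rw [C.dim_tgt x (by omega)]; omega)]
    rfl

theorem srcI_comp_of_lt {p q : ℕ} {x y : C.Cell} (h : C.Composable p x y) (hq : p < q) :
    C.srcI q (C.comp p x y) = C.comp p (C.srcI q x) (C.srcI q y) := by
  rw [PreOmegaCat.srcI, PreOmegaCat.srcI, PreOmegaCat.srcI, C.dim_comp p x y h, h.2.1,
    src_iterate_comp h (by omega)]

theorem tgtI_comp_of_lt {p q : ℕ} {x y : C.Cell} (h : C.Composable p x y) (hq : p < q) :
    C.tgtI q (C.comp p x y) = C.comp p (C.tgtI q x) (C.tgtI q y) := by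
  rw [PreOmegaCat.tgtI, PreOmegaCat.tgtI, PreOmegaCat.tgtI, C.dim_comp p x y h, h.2.1,
    tgt_iterate_comp h (by omega)]

theorem srcI_comp_self {p : ℕ} {x y : C.Cell} (h : C.Composable p x y) :
    C.srcI p (C.comp p x y) = C.srcI p y := by
  have h' := composable_srcI h (Nat.lt_succ_self p)
  have hd : C.dim (C.srcI (p + 1) x) = p + 1 := dim_srcI h.1
  rw [← srcI_srcI p.le_succ (C.comp p x y), srcI_comp_of_lt h p.lt_succ_self,
    srcI_of_dim_eq_succ ((C.dim_comp p _ _ h').trans hd), C.src_comp_top p _ _ h' hd,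
    ← srcI_of_dim_eq_succ (h'.2.1.trans hd), srcI_srcI p.le_succ]

theorem tgtI_comp_self {p : ℕ} {x y : C.Cell} (h : C.Composable p x y) :
    C.tgtI p (C.comp p x y) = C.tgtI p x := by
  have h' := composable_tgtI h (Nat.lt_succ_self p)
  have hd : C.dim (C.tgtI (p + 1) x) = p + 1 := dim_tgtI h.1
  rw [← tgtI_tgtI p.le_succ (C.comp p x y), tgtI_comp_of_lt h p.lt_succ_self,
    tgtI_of_dim_eq_succ ((C.dim_comp p _ _ h').trans hd), C.tgt_comp_top p _ _ h' hd,
    ← tgtI_of_dim_eq_succ hd, tgtI_tgtI p.le_succ]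

theorem srcI_comp_of_le {p q : ℕ} {x y : C.Cell} (h : C.Composable p x y) (hq : q ≤ p) :
    C.srcI q (C.comp p x y) = C.srcI q y := by
  rw [← srcI_srcI hq, srcI_comp_self h, srcI_srcI hq]

theorem tgtI_comp_of_le {p q : ℕ} {x y : C.Cell} (h : C.Composable p x y) (hq : q ≤ p) :
    C.tgtI q (C.comp p x y) = C.tgtI q x := by
  rw [← tgtI_tgtI hq, tgtI_comp_self h, tgtI_tgtI hq]

theorem composable_comp_left {p : ℕ} {x y z : C.Cell} (hxy : C.Composable p x y)
    (hyz : C.Composable p y z) : C.Composable p (C.comp p x y) z := by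
  have hd := C.dim_comp p x y hxy
  refine ⟨by omega, by rw [hd]; exact hyz.2.1.trans hxy.2.1, ?_⟩
  rw [srcI_comp_self hxy, hyz.2.2]

theorem composable_comp_right {p : ℕ} {x y z : C.Cell} (hxy : C.Composable p x y)
    (hyz : C.Composable p y z) : C.Composable p x (C.comp p y z) := by
  refine ⟨hxy.1, by rw [C.dim_comp p y z hyz]; exact hxy.2.1, ?_⟩
  rw [tgtI_comp_self hyz, hxy.2.2]

theorem composable_unit_iterate_srcI {p : ℕ} {x : C.Cell} (h : p < C.dim x) :
    C.Composable p x (C.unit^[C.dim x - p] (C.srcI p x)) := by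
  have hd : C.dim (C.srcI p x) = p := dim_srcI h.le
  refine ⟨h, by rw [dim_unit_iterate, hd]; omega, ?_⟩
  rw [tgtI_unit_iterate_of_le hd.ge, tgtI_of_dim_le hd.le]

theorem composable_unit_iterate_tgtI {p : ℕ} {x : C.Cell} (h : p < C.dim x) :
    C.Composable p (C.unit^[C.dim x - p] (C.tgtI p x)) x := by
  have hd : C.dim (C.tgtI p x) = p := dim_tgtI h.le
  refine ⟨by rw [dim_unit_iterate, hd]; omega, by rw [dim_unit_iterate, hd]; omega, ?_⟩
  rw [srcI_unit_iterate_of_le hd.ge, srcI_of_dim_le hd.le]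

theorem composable_unit {p : ℕ} {x y : C.Cell} (h : C.Composable p x y) :
    C.Composable p (C.unit x) (C.unit y) := by
  obtain ⟨hp, hd, hst⟩ := h
  refine ⟨by rw [C.dim_unit]; omega, by rw [C.dim_unit, C.dim_unit, hd], ?_⟩
  rw [srcI_unit (by omega), tgtI_unit (by omega), hst]

theorem composable_comp_comp_of_lt {p q : ℕ} {x y x' y' : C.Cell} (hqp : q < p)
    (h1 : C.Composable p x y) (h2 : C.Composable p x' y')
    (h3 : C.Composable q x x') (h4 : C.Composable q y y') :
    C.Composable q (C.comp p x y) (C.comp p x' y') := by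
  refine ⟨by rw [C.dim_comp p x y h1]; exact h3.1,
    by rw [C.dim_comp p x y h1, C.dim_comp p x' y' h2]; exact h3.2.1, ?_⟩
  rw [srcI_comp_of_le h1 hqp.le, tgtI_comp_of_le h2 hqp.le, h4.2.2,
    ← tgtI_srcI hqp x', h2.2.2, tgtI_tgtI hqp.le]

theorem composable_comp_comp_of_gt {p q : ℕ} {x y x' y' : C.Cell} (hqp : q < p)
    (h1 : C.Composable p x y) (h2 : C.Composable p x' y')
    (h3 : C.Composable q x x') (h4 : C.Composable q y y') :
    C.Composable p (C.comp q x x') (C.comp q y y') := by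
  refine ⟨by rw [C.dim_comp q x x' h3]; exact h1.1,
    by rw [C.dim_comp q x x' h3, C.dim_comp q y y' h4]; exact h1.2.1, ?_⟩
  rw [srcI_comp_of_lt h3 hqp, tgtI_comp_of_lt h4 hqp, h1.2.2, h2.2.2]

end OmegaCat

namespace PartFunc

variable {C D : OmegaCat.{u}} {n : ℕ}

def restrict (g : PartFunc C D n) {k : ℕ} (hk : k ≤ n) : PartFunc C D k where
  map := g.map
  map_dim x h := g.map_dim x (h.trans hk)
  map_src x h := g.map_src x (h.trans hk)
  map_tgt x h := g.map_tgt x (h.trans hk)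
  map_comp p x y h hc := g.map_comp p x y (h.trans hk) hc
  map_unit x h := g.map_unit x (h.trans hk)

def precomp {C₀ : OmegaCat.{u}} (φ : OmegaFunctor C₀ C) (g : PartFunc C D n) :
    PartFunc C₀ D n where
  map x := g.map (φ.map x)
  map_dim x h := by rw [g.map_dim _ (by rwa [φ.map_dim]), φ.map_dim]
  map_src x h := by rw [φ.map_src, g.map_src _ (by rwa [φ.map_dim])]
  map_tgt x h := by rw [φ.map_tgt, g.map_tgt _ (by rwa [φ.map_dim])]
  map_comp p x y h hc := by
    rw [φ.map_comp p x y hc, g.map_comp p _ _ (by rwa [φ.map_dim]) (φ.map_composable hc)]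
  map_unit x h := by rw [φ.map_unit, g.map_unit _ (by rwa [φ.map_dim])]

theorem map_src_iterate (g : PartFunc C D n) (k : ℕ) {x : C.Cell} (h : C.dim x ≤ n) :
    g.map (C.src^[k] x) = D.src^[k] (g.map x) := by
  induction k with
  | zero => rfl
  | succ k ih =>
    rw [Function.iterate_succ_apply', Function.iterate_succ_apply',
      g.map_src _ ((dim_src_iterate_le k x).trans h), ih]

theorem map_tgt_iterate (g : PartFunc C D n) (k : ℕ) {x : C.Cell} (h : C.dim x ≤ n) :
    g.map (C.tgt^[k] x) = D.tgt^[k] (g.map x) := by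
  induction k with
  | zero => rfl
  | succ k ih =>
    rw [Function.iterate_succ_apply', Function.iterate_succ_apply',
      g.map_tgt _ ((dim_tgt_iterate_le k x).trans h), ih]

theorem map_srcI (g : PartFunc C D n) (p : ℕ) {x : C.Cell} (h : C.dim x ≤ n) :
    g.map (C.srcI p x) = D.srcI p (g.map x) := by
  rw [PreOmegaCat.srcI, PreOmegaCat.srcI, g.map_dim x h, map_src_iterate g _ h]

theorem map_tgtI (g : PartFunc C D n) (p : ℕ) {x : C.Cell} (h : C.dim x ≤ n) :
    g.map (C.tgtI p x) = D.tgtI p (g.map x) := by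
  rw [PreOmegaCat.tgtI, PreOmegaCat.tgtI, g.map_dim x h, map_tgt_iterate g _ h]

theorem map_unit_iterate (g : PartFunc C D n) (k : ℕ) {x : C.Cell} (h : C.dim x + k ≤ n) :
    g.map (C.unit^[k] x) = D.unit^[k] (g.map x) := by
  induction k with
  | zero => rfl
  | succ k ih =>
    rw [Function.iterate_succ_apply', Function.iterate_succ_apply',
      g.map_unit _ (by rw [dim_unit_iterate]; omega), ih (by omega)]

theorem map_composable (g : PartFunc C D n) {p : ℕ} {x y : C.Cell}
    (hc : C.Composable p x y) (h : C.dim x ≤ n) : D.Composable p (g.map x) (g.map y) := by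
  obtain ⟨h1, h2, h3⟩ := hc
  refine ⟨by rwa [g.map_dim x h], by rw [g.map_dim x h, g.map_dim y (by omega), h2], ?_⟩
  rw [← map_srcI g p h, ← map_tgtI g p (by omega), h3]

def postcomp {D₀ : OmegaCat.{u}} (g : PartFunc C D n) (φ : OmegaFunctor D D₀) :
    PartFunc C D₀ n where
  map x := φ.map (g.map x)
  map_dim x h := by rw [φ.map_dim, g.map_dim x h]
  map_src x h := by rw [g.map_src x h, φ.map_src]
  map_tgt x h := by rw [g.map_tgt x h, φ.map_tgt]
  map_comp p x y h hc := by rw [g.map_comp p x y h hc, φ.map_comp p _ _ (g.map_composable hc h)]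
  map_unit x h := by rw [g.map_unit x h, φ.map_unit]

def ofDimZero (m : C.Cell → D.Cell) (hm : ∀ x, C.dim x = 0 → D.dim (m x) = 0) :
    PartFunc C D 0 where
  map := m
  map_dim x h := by rw [hm x (by omega), Nat.le_zero.mp h]
  map_src x h := by rw [C.src_dim0 x (by omega), D.src_dim0 _ (hm x (by omega))]
  map_tgt x h := by rw [C.tgt_dim0 x (by omega), D.tgt_dim0 _ (hm x (by omega))]
  map_comp p x y h hc := absurd hc.1 (by omega)
  map_unit x h := absurd h (by omega)

def glue (G : ∀ n, PartFunc C D n)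
    (hG : ∀ n x, C.dim x ≤ n → (G n).map x = (G (C.dim x)).map x) : OmegaFunctor C D where
  map x := (G (C.dim x)).map x
  map_dim x := (G (C.dim x)).map_dim x le_rfl
  map_src x := by
    rw [← hG _ _ (dim_src_le x)]; exact (G _).map_src x le_rfl
  map_tgt x := by
    rw [← hG _ _ (dim_tgt_le x)]; exact (G _).map_tgt x le_rfl
  map_comp p x y h := by
    rw [← hG (C.dim x) _ (C.dim_comp p x y h).le, ← hG (C.dim x) y h.2.1.le]
    exact (G _).map_comp p x y le_rfl h
  map_unit x := by
    rw [← hG (C.dim x + 1) _ (C.dim_unit x).le, ← hG (C.dim x + 1) x (Nat.le_succ _)]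
    exact (G _).map_unit x le_rfl

theorem glue_map (G : ∀ n, PartFunc C D n)
    (hG : ∀ n x, C.dim x ≤ n → (G n).map x = (G (C.dim x)).map x) {n : ℕ} {x : C.Cell}
    (hx : C.dim x ≤ n) : (glue G hG).map x = (G n).map x :=
  (hG n x hx).symm

end PartFunc

def OmegaFunctor.toPart {C D : OmegaCat.{u}} (f : OmegaFunctor C D) (n : ℕ) :
    PartFunc C D n where
  map := f.map
  map_dim x _ := f.map_dim x
  map_src x _ := f.map_src x
  map_tgt x _ := f.map_tgt x
  map_comp p x y _ hc := f.map_comp p x y hc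
  map_unit x _ := f.map_unit x

namespace OmegaCat

variable {C : OmegaCat.{u}}

structure FoldComposable (C : OmegaCat.{u}) (b : C.Cell) (s : ℕ → C.Cell) (k : ℕ) :
    Prop where
  le_dim : k ≤ C.dim b
  dim_eq : ∀ i < k, C.dim (s i) = i + 1
  tgt_eq : ∀ i < k, C.tgt (s i) = C.foldComp (C.srcI i b) s i

theorem foldComp_congr {b : C.Cell} {s s' : ℕ → C.Cell} {k : ℕ}
    (h : ∀ i < k, s i = s' i) : C.foldComp b s k = C.foldComp b s' k := by
  induction k with
  | zero => rfl
  | succ k ih =>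
    rw [PreOmegaCat.foldComp, PreOmegaCat.foldComp, ih (fun i hi => h i (by omega)),
      h k k.lt_succ_self]

namespace FoldComposable

variable {b : C.Cell} {s : ℕ → C.Cell} {k : ℕ}

theorem mono (hs : FoldComposable C b s k) {j : ℕ} (hj : j ≤ k) : FoldComposable C b s j :=
  ⟨hj.trans hs.le_dim, fun i hi => hs.dim_eq i (by omega), fun i hi => hs.tgt_eq i (by omega)⟩

theorem srcI (hs : FoldComposable C b s k) {q : ℕ} (hkq : k ≤ q) (hq : q ≤ C.dim b) :
    FoldComposable C (C.srcI q b) s k :=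
  ⟨by rwa [dim_srcI hq], hs.dim_eq,
    fun i hi => by rw [hs.tgt_eq i hi, srcI_srcI (by omega)]⟩

theorem tgtI (hs : FoldComposable C b s k) {q : ℕ} (hkq : k ≤ q) (hq : q ≤ C.dim b) :
    FoldComposable C (C.tgtI q b) s k :=
  ⟨by rwa [dim_tgtI hq], hs.dim_eq,
    fun i hi => by rw [hs.tgt_eq i hi, srcI_tgtI (by omega)]⟩

theorem composable_and_foldComp_succ (hs : FoldComposable C b s (k + 1))
    (hdim : C.dim (C.foldComp b s k) = C.dim b)
    (hsrc : C.srcI k (C.foldComp b s k) = C.foldComp (C.srcI k b) s k) :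
    C.Composable k (C.foldComp b s k) (C.unit^[C.dim b - (k + 1)] (s k)) ∧
      C.foldComp b s (k + 1) =
        C.comp k (C.foldComp b s k) (C.unit^[C.dim b - (k + 1)] (s k)) := by
  have hsk := hs.dim_eq k k.lt_succ_self
  have hle := hs.le_dim
  refine ⟨⟨by omega, by rw [dim_unit_iterate, hsk, hdim]; omega, ?_⟩, ?_⟩
  · rw [hsrc, tgtI_unit_iterate_of_le (by omega), tgtI_of_dim_eq_succ hsk,
      hs.tgt_eq k k.lt_succ_self]
  · rw [PreOmegaCat.foldComp, mcomp_of_dim_le (by omega), hdim, hsk]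

theorem dim_and_faces_foldComp (hs : FoldComposable C b s k) :
    C.dim (C.foldComp b s k) = C.dim b ∧
      (∀ q, k ≤ q → C.srcI q (C.foldComp b s k) = C.foldComp (C.srcI q b) s k) ∧
      (∀ q, k ≤ q → C.tgtI q (C.foldComp b s k) = C.foldComp (C.tgtI q b) s k) := by
  induction k generalizing b with
  | zero => exact ⟨rfl, fun _ _ => rfl, fun _ _ => rfl⟩
  | succ k ih =>
    have hsk := hs.dim_eq k k.lt_succ_self
    obtain ⟨hdim, hsrc, htgt⟩ := ih (hs.mono k.le_succ)
    obtain ⟨hcomp, heq⟩ := hs.composable_and_foldComp_succ hdim (hsrc k le_rfl)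
    have hdim' : C.dim (C.foldComp b s (k + 1)) = C.dim b := by
      rw [heq, C.dim_comp _ _ _ hcomp, hdim]
    refine ⟨hdim', fun q hq => ?_, fun q hq => ?_⟩
    · rcases le_or_gt (C.dim b) q with hbq | hbq
      · rw [srcI_of_dim_le hbq, srcI_of_dim_le (hdim'.trans_le hbq)]
      · have hs' := hs.srcI hq hbq.le
        obtain ⟨hdimq, hsrcq, -⟩ := ih (hs'.mono k.le_succ)
        rw [heq, srcI_comp_of_lt hcomp (by omega), hsrc q (by omega),
          srcI_unit_iterate_of_ge (by omega) (by omega), hsk,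
          (hs'.composable_and_foldComp_succ hdimq (hsrcq k le_rfl)).2, dim_srcI hbq.le]
    · rcases le_or_gt (C.dim b) q with hbq | hbq
      · rw [tgtI_of_dim_le hbq, tgtI_of_dim_le (hdim'.trans_le hbq)]
      · have hs' := hs.tgtI hq hbq.le
        obtain ⟨hdimq, hsrcq, -⟩ := ih (hs'.mono k.le_succ)
        rw [heq, tgtI_comp_of_lt hcomp (by omega), htgt q (by omega),
          tgtI_unit_iterate_of_ge (by omega) (by omega), hsk,
          (hs'.composable_and_foldComp_succ hdimq (hsrcq k le_rfl)).2, dim_tgtI hbq.le]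

theorem dim_foldComp (hs : FoldComposable C b s k) : C.dim (C.foldComp b s k) = C.dim b :=
  hs.dim_and_faces_foldComp.1

theorem srcI_foldComp (hs : FoldComposable C b s k) {q : ℕ} (hq : k ≤ q) :
    C.srcI q (C.foldComp b s k) = C.foldComp (C.srcI q b) s k :=
  hs.dim_and_faces_foldComp.2.1 q hq

theorem tgtI_foldComp (hs : FoldComposable C b s k) {q : ℕ} (hq : k ≤ q) :
    C.tgtI q (C.foldComp b s k) = C.foldComp (C.tgtI q b) s k :=
  hs.dim_and_faces_foldComp.2.2 q hq

theorem composable_succ (hs : FoldComposable C b s (k + 1)) :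
    C.Composable k (C.foldComp b s k) (C.unit^[C.dim b - (k + 1)] (s k)) :=
  (hs.composable_and_foldComp_succ (hs.mono k.le_succ).dim_foldComp
    ((hs.mono k.le_succ).srcI_foldComp le_rfl)).1

theorem foldComp_succ (hs : FoldComposable C b s (k + 1)) :
    C.foldComp b s (k + 1) =
      C.comp k (C.foldComp b s k) (C.unit^[C.dim b - (k + 1)] (s k)) :=
  (hs.composable_and_foldComp_succ (hs.mono k.le_succ).dim_foldComp
    ((hs.mono k.le_succ).srcI_foldComp le_rfl)).2

theorem tgtI_foldComp_of_le (hs : FoldComposable C b s k) {q : ℕ} (hq : q ≤ k) :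
    C.tgtI q (C.foldComp b s k) = C.foldComp (C.tgtI q b) s q := by
  induction k with
  | zero =>
    obtain rfl : q = 0 := by omega
    rfl
  | succ k ih =>
    rcases hq.lt_or_eq with hq | rfl
    · rw [hs.foldComp_succ, tgtI_comp_of_le hs.composable_succ (by omega),
        ih (hs.mono k.le_succ) (by omega)]
    · exact hs.tgtI_foldComp le_rfl

theorem map_foldComp {D : OmegaCat.{u}} {N : ℕ} (g : PartFunc C D N)
    (hs : FoldComposable C b s k) (hN : C.dim b ≤ N) :
    g.map (C.foldComp b s k) = D.foldComp (g.map b) (fun i => g.map (s i)) k := by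
  induction k using Nat.strong_induction_on generalizing b with
  | _ k ih =>
  cases k with
  | zero => rfl
  | succ k =>
    have hle := hs.le_dim
    have hsk := hs.dim_eq k k.lt_succ_self
    have hs' := hs.mono k.le_succ
    have hD : FoldComposable D (g.map b) (fun i => g.map (s i)) (k + 1) := by
      refine ⟨by rwa [g.map_dim b hN], fun i hi => ?_, fun i hi => ?_⟩
      · rw [g.map_dim _ (by rw [hs.dim_eq i hi]; omega), hs.dim_eq i hi]
      · rw [← g.map_tgt _ (by rw [hs.dim_eq i hi]; omega), hs.tgt_eq i hi,
          ih i (by omega) ((hs.mono hi.le).srcI le_rfl (by omega))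
            (by rw [dim_srcI (by omega)]; omega),
          g.map_srcI i hN]
    rw [hs.foldComp_succ, g.map_comp _ _ _ (by rw [hs'.dim_foldComp]; exact hN) hs.composable_succ,
      ih k k.lt_succ_self hs' hN, g.map_unit_iterate _ (by omega), hD.foldComp_succ, g.map_dim b hN]

end FoldComposable

end OmegaCat

namespace Expansion

variable {C : OmegaCat.{u}} (E : Expansion C)

theorem foldComposable_xi (x : C.Cell) :
    FoldComposable C x (fun i => E.xi (C.srcI i x)) (C.dim x) where
  le_dim := le_rfl
  dim_eq i hi := by rw [E.dim_xi, dim_srcI hi.le]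
  tgt_eq i hi := by
    rw [E.xi_tgt, dim_srcI hi.le]
    exact foldComp_congr fun j hj => by rw [srcI_srcI (by omega)]

theorem srcI_succ_xi {j : ℕ} {z : C.Cell} (hj : j ≤ C.dim z) :
    C.srcI (j + 1) (E.xi z) = E.xi (C.tgtI j z) := by
  induction h : C.dim z - j generalizing z with
  | zero =>
    rw [srcI_of_dim_le (by rw [E.dim_xi]; omega), tgtI_of_dim_le (by omega)]
  | succ d ih =>
    have h0 : C.dim z ≠ 0 := by omega
    rw [← srcI_src (by rw [E.dim_xi]; omega), E.xi_src z h0,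
      ih (by rw [C.dim_tgt z h0]; omega) (by rw [C.dim_tgt z h0]; omega), tgtI_tgt (by omega)]

theorem tgtI_xi {q : ℕ} {z : C.Cell} (hq : q ≤ C.dim z) :
    C.tgtI q (E.xi z) = C.foldComp (C.tgtI q z) (fun i => E.xi (C.srcI i z)) q := by
  rw [← tgtI_tgt (by rw [E.dim_xi]; omega), E.xi_tgt,
    (E.foldComposable_xi z).tgtI_foldComp_of_le hq]

/-- The first factor `t y_{p+1} ∘_0 ξ_{s x_0} ∘_1 ⋯ ∘_{p-1} ξ_{s x_{p-1}}` of `ξ_{y ∘_p x}`. -/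
def compPrefix (p : ℕ) (y x : C.Cell) : C.Cell :=
  C.foldComp (C.tgtI (p + 1) y) (fun i => E.xi (C.srcI i x)) p

variable {E}

theorem foldComposable_compPrefix {p : ℕ} {x y : C.Cell} (h : C.Composable p y x) :
    FoldComposable C (C.tgtI (p + 1) y) (fun i => E.xi (C.srcI i x)) p where
  le_dim := by rw [dim_tgtI h.1]; omega
  dim_eq i hi := by rw [E.dim_xi, dim_srcI (by rw [h.2.1]; omega)]
  tgt_eq i hi := by
    rw [E.xi_tgt, dim_srcI (by rw [h.2.1]; omega), srcI_tgtI (by omega),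
      ← srcI_srcI hi.le y, h.2.2, srcI_tgtI hi]
    exact foldComp_congr fun j hj => by rw [srcI_srcI (by omega)]

theorem dim_compPrefix {p : ℕ} {x y : C.Cell} (h : C.Composable p y x) :
    C.dim (E.compPrefix p y x) = p + 1 := by
  rw [compPrefix, (foldComposable_compPrefix h).dim_foldComp, dim_tgtI h.1]

theorem composable_compPrefix_xi {p : ℕ} {x y : C.Cell} (h : C.Composable p y x) :
    C.Composable p (C.unit^[C.dim y - p] (E.compPrefix p y x)) (E.xi x) := by
  have hA := dim_compPrefix (E := E) h
  refine ⟨by rw [dim_unit_iterate, hA]; omega,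
    by rw [E.dim_xi, dim_unit_iterate, hA, h.2.1]; omega, ?_⟩
  rw [srcI_unit_iterate_of_le (by omega), compPrefix,
    (foldComposable_compPrefix h).srcI_foldComp le_rfl, srcI_tgtI p.lt_succ_self, h.2.2,
    E.tgtI_xi (by rw [h.2.1]; exact h.1.le)]

theorem composable_xi_comp {p : ℕ} {x y : C.Cell} (h : C.Composable p y x) :
    C.Composable (p + 1) (C.comp p (C.unit^[C.dim y - p] (E.compPrefix p y x)) (E.xi x))
      (E.xi y) := by
  have hA := dim_compPrefix (E := E) h
  have hc := composable_compPrefix_xi (E := E) h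
  have hdim : C.dim (C.comp p (C.unit^[C.dim y - p] (E.compPrefix p y x)) (E.xi x)) =
      C.dim y + 1 := by
    rw [C.dim_comp _ _ _ hc, dim_unit_iterate, hA]; omega
  have hY : FoldComposable C (C.tgtI (p + 1) y) (fun i => E.xi (C.srcI i y)) (p + 1) :=
    ((E.foldComposable_xi y).mono h.1).tgtI le_rfl h.1
  refine ⟨by rw [hdim]; omega, by rw [E.dim_xi, hdim], ?_⟩
  rw [srcI_comp_of_lt hc p.lt_succ_self, srcI_unit_iterate_of_le hA.ge, srcI_of_dim_le hA.le,
    E.srcI_succ_xi (by rw [h.2.1]; exact h.1.le), E.tgtI_xi h.1, hY.foldComp_succ,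
    dim_tgtI h.1, Nat.sub_self, Function.iterate_zero_apply, h.2.2, compPrefix]
  congr 1
  exact foldComp_congr fun i hi => by rw [← srcI_srcI hi.le y, h.2.2, srcI_tgtI hi]

theorem xi_comp_eq_comp {p : ℕ} {x y : C.Cell} (h : C.Composable p y x) :
    E.xi (C.comp p y x) =
      C.comp (p + 1) (C.comp p (C.unit^[C.dim y - p] (E.compPrefix p y x)) (E.xi x))
        (E.xi y) := by
  have hA := dim_compPrefix (E := E) h
  have hc := composable_compPrefix_xi (E := E) h
  have hinner : C.mcomp p (E.compPrefix p y x) (E.xi x) =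
      C.comp p (C.unit^[C.dim y - p] (E.compPrefix p y x)) (E.xi x) := by
    rw [mcomp_of_dim_ge (by rw [hA, E.dim_xi]; omega), hA, E.dim_xi, h.2.1,
      show C.dim y + 1 - (p + 1) = C.dim y - p by omega]
  rw [E.xi_comp p x y h, ← compPrefix, hinner,
    mcomp_of_dim_eq (by rw [E.dim_xi, C.dim_comp _ _ _ hc, dim_unit_iterate, hA]; omega)]

theorem map_xi_comp_eq {D : OmegaCat.{u}} {N : ℕ} (g : PartFunc C D N) {p : ℕ} {x y : C.Cell}
    (h : C.Composable p y x) (hN : C.dim y + 1 ≤ N) :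
    g.map (E.xi (C.comp p y x)) =
      D.comp (p + 1)
        (D.comp p (D.unit^[C.dim y - p] (g.map (E.compPrefix p y x))) (g.map (E.xi x)))
        (g.map (E.xi y)) := by
  have hA := dim_compPrefix (E := E) h
  have hc := composable_compPrefix_xi (E := E) h
  rw [xi_comp_eq_comp h,
    g.map_comp _ _ _ (by rw [C.dim_comp _ _ _ hc, dim_unit_iterate, hA]; omega)
      (composable_xi_comp h),
    g.map_comp _ _ _ (by rw [dim_unit_iterate, hA]; omega) hc,
    g.map_unit_iterate _ (by rw [hA]; omega)]

theorem map_xi_comp {D : OmegaCat.{u}} (ED : Expansion D) {N : ℕ} (g : PartFunc C D N)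
    {p : ℕ} {x y : C.Cell} (h : C.Composable p y x) (hN : C.dim y + 1 ≤ N)
    (hx : g.map (E.xi x) = ED.xi (g.map x)) (hy : g.map (E.xi y) = ED.xi (g.map y))
    (hfaces : ∀ i < p, g.map (E.xi (C.srcI i x)) = ED.xi (g.map (C.srcI i x))) :
    g.map (E.xi (C.comp p y x)) = ED.xi (g.map (C.comp p y x)) := by
  rw [map_xi_comp_eq g h hN, hx, hy, g.map_comp p y x (by omega) h,
    xi_comp_eq_comp (g.map_composable h (by omega)), g.map_dim y (by omega), compPrefix,
    compPrefix, (foldComposable_compPrefix h).map_foldComp g (by rw [dim_tgtI h.1]; omega),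
    g.map_tgtI _ (by omega)]
  congr 3
  refine foldComp_congr fun i hi => ?_
  rw [hfaces i hi, g.map_srcI i (by rw [h.2.1]; omega)]

end Expansion

namespace OmegaCat

structure IsSubOmegaCat (C : OmegaCat.{u}) (Φ : C.Cell → Prop) : Prop where
  src : ∀ x, Φ x → Φ (C.src x)
  tgt : ∀ x, Φ x → Φ (C.tgt x)
  unit : ∀ x, Φ x → Φ (C.unit x)
  comp : ∀ p x y, C.Composable p x y → Φ x → Φ y → Φ (C.comp p x y)

namespace IsSubOmegaCat

variable {C : OmegaCat.{u}} {Φ : C.Cell → Prop} (hΦ : IsSubOmegaCat C Φ)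

open scoped Classical in
def subComp (p : ℕ) (z w : Subtype Φ) : Subtype Φ :=
  if h : C.Composable p z.1 w.1 then ⟨C.comp p z.1 w.1, hΦ.comp p _ _ h z.2 w.2⟩ else z

@[reducible]
def toPreOmegaCat : PreOmegaCat.{u} where
  Cell := Subtype Φ
  dim z := C.dim z.1
  src z := ⟨C.src z.1, hΦ.src _ z.2⟩
  tgt z := ⟨C.tgt z.1, hΦ.tgt _ z.2⟩
  comp := hΦ.subComp
  unit z := ⟨C.unit z.1, hΦ.unit _ z.2⟩

theorem subComp_eq {p : ℕ} {z w : Subtype Φ} (h : C.Composable p z.1 w.1) :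
    hΦ.subComp p z w = ⟨C.comp p z.1 w.1, hΦ.comp p _ _ h z.2 w.2⟩ := by
  rw [subComp, dif_pos h]

theorem src_iterate_val (k : ℕ) (z : Subtype Φ) :
    (hΦ.toPreOmegaCat.src^[k] z).1 = C.src^[k] z.1 := by
  induction k generalizing z with
  | zero => rfl
  | succ k ih => exact ih _

theorem tgt_iterate_val (k : ℕ) (z : Subtype Φ) :
    (hΦ.toPreOmegaCat.tgt^[k] z).1 = C.tgt^[k] z.1 := by
  induction k generalizing z with
  | zero => rfl
  | succ k ih => exact ih _

theorem unit_iterate_val (k : ℕ) (z : Subtype Φ) :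
    (hΦ.toPreOmegaCat.unit^[k] z).1 = C.unit^[k] z.1 := by
  induction k generalizing z with
  | zero => rfl
  | succ k ih => exact ih _

theorem srcI_val (p : ℕ) (z : Subtype Φ) :
    (hΦ.toPreOmegaCat.srcI p z).1 = C.srcI p z.1 :=
  hΦ.src_iterate_val _ z

theorem tgtI_val (p : ℕ) (z : Subtype Φ) :
    (hΦ.toPreOmegaCat.tgtI p z).1 = C.tgtI p z.1 :=
  hΦ.tgt_iterate_val _ z

theorem composable_iff {p : ℕ} {z w : Subtype Φ} :
    hΦ.toPreOmegaCat.Composable p z w ↔ C.Composable p z.1 w.1 := by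
  refine and_congr_right fun _ => and_congr_right fun _ => ?_
  rw [← hΦ.srcI_val, ← hΦ.tgtI_val, Subtype.ext_iff]

theorem comp_val {p : ℕ} {z w : Subtype Φ} (h : hΦ.toPreOmegaCat.Composable p z w) :
    (hΦ.toPreOmegaCat.comp p z w).1 = C.comp p z.1 w.1 := by
  rw [show hΦ.toPreOmegaCat.comp = hΦ.subComp from rfl, hΦ.subComp_eq (hΦ.composable_iff.mp h)]

def toOmegaCat : OmegaCat.{u} where
  toPreOmegaCat := hΦ.toPreOmegaCat
  dim_src z h := C.dim_src z.1 h
  dim_tgt z h := C.dim_tgt z.1 h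
  src_dim0 z h := Subtype.ext (C.src_dim0 z.1 h)
  tgt_dim0 z h := Subtype.ext (C.tgt_dim0 z.1 h)
  glob_ss z h := Subtype.ext (C.glob_ss z.1 h)
  glob_tt z h := Subtype.ext (C.glob_tt z.1 h)
  dim_unit z := C.dim_unit z.1
  src_unit z := Subtype.ext (C.src_unit z.1)
  tgt_unit z := Subtype.ext (C.tgt_unit z.1)
  dim_comp p z w h := by
    show C.dim (hΦ.toPreOmegaCat.comp p z w).1 = _
    rw [hΦ.comp_val h]; exact C.dim_comp p _ _ (hΦ.composable_iff.mp h)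
  src_comp_top p z w h htop := Subtype.ext <| by
    show C.src (hΦ.toPreOmegaCat.comp p z w).1 = _
    rw [hΦ.comp_val h]; exact C.src_comp_top p _ _ (hΦ.composable_iff.mp h) htop
  tgt_comp_top p z w h htop := Subtype.ext <| by
    show C.tgt (hΦ.toPreOmegaCat.comp p z w).1 = _
    rw [hΦ.comp_val h]; exact C.tgt_comp_top p _ _ (hΦ.composable_iff.mp h) htop
  src_comp p z w h hlt := by
    have h' := hΦ.composable_iff.mp h
    show _ = hΦ.subComp p _ _
    rw [hΦ.subComp_eq (composable_src h' hlt)]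
    exact Subtype.ext <| (congrArg C.src (hΦ.comp_val h)).trans (C.src_comp p _ _ h' hlt)
  tgt_comp p z w h hlt := by
    have h' := hΦ.composable_iff.mp h
    show _ = hΦ.subComp p _ _
    rw [hΦ.subComp_eq (composable_tgt h' hlt)]
    exact Subtype.ext <| (congrArg C.tgt (hΦ.comp_val h)).trans (C.tgt_comp p _ _ h' hlt)
  comp_assoc p x y z h1 h2 := by
    have h1' := hΦ.composable_iff.mp h1
    have h2' := hΦ.composable_iff.mp h2
    show hΦ.subComp p (hΦ.subComp p x y) z = hΦ.subComp p x (hΦ.subComp p y z)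
    rw [hΦ.subComp_eq h1', hΦ.subComp_eq h2', hΦ.subComp_eq (composable_comp_left h1' h2'),
      hΦ.subComp_eq (composable_comp_right h1' h2')]
    exact Subtype.ext (C.comp_assoc p _ _ _ h1' h2')
  comp_unit_src p z h := by
    have hval : (hΦ.toPreOmegaCat.unit^[C.dim z.1 - p] (hΦ.toPreOmegaCat.srcI p z)).1 =
        C.unit^[C.dim z.1 - p] (C.srcI p z.1) := by
      rw [hΦ.unit_iterate_val, hΦ.srcI_val]
    show hΦ.subComp p z _ = z
    rw [hΦ.subComp_eq (by rw [hval]; exact composable_unit_iterate_srcI h)]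
    exact Subtype.ext ((congrArg (C.comp p z.1) hval).trans (C.comp_unit_src p z.1 h))
  comp_unit_tgt p z h := by
    have hval : (hΦ.toPreOmegaCat.unit^[C.dim z.1 - p] (hΦ.toPreOmegaCat.tgtI p z)).1 =
        C.unit^[C.dim z.1 - p] (C.tgtI p z.1) := by
      rw [hΦ.unit_iterate_val, hΦ.tgtI_val]
    show hΦ.subComp p _ z = z
    rw [hΦ.subComp_eq (by rw [hval]; exact composable_unit_iterate_tgtI h)]
    exact Subtype.ext ((congrArg (C.comp p · z.1) hval).trans (C.comp_unit_tgt p z.1 h))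
  interchange p q x y x' y' hqp h1 h2 h3 h4 := by
    have h1' := hΦ.composable_iff.mp h1
    have h2' := hΦ.composable_iff.mp h2
    have h3' := hΦ.composable_iff.mp h3
    have h4' := hΦ.composable_iff.mp h4
    show hΦ.subComp q (hΦ.subComp p x y) (hΦ.subComp p x' y') =
      hΦ.subComp p (hΦ.subComp q x x') (hΦ.subComp q y y')
    rw [hΦ.subComp_eq h1', hΦ.subComp_eq h2', hΦ.subComp_eq h3', hΦ.subComp_eq h4',
      hΦ.subComp_eq (composable_comp_comp_of_lt hqp h1' h2' h3' h4'),
      hΦ.subComp_eq (composable_comp_comp_of_gt hqp h1' h2' h3' h4')]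
    exact Subtype.ext (C.interchange p q _ _ _ _ hqp h1' h2' h3' h4')
  unit_comp p z w h := by
    have h' := hΦ.composable_iff.mp h
    show hΦ.toPreOmegaCat.unit (hΦ.subComp p z w) = hΦ.subComp p _ _
    rw [hΦ.subComp_eq h', hΦ.subComp_eq (composable_unit h')]
    exact Subtype.ext (C.unit_comp p _ _ h')

def incl : OmegaFunctor hΦ.toOmegaCat C where
  map z := z.1
  map_dim _ := rfl
  map_src _ := rfl
  map_tgt _ := rfl
  map_comp _ _ _ h := hΦ.comp_val h
  map_unit _ := rfl

end IsSubOmegaCat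

def FacesSatisfy (C : OmegaCat.{u}) (P : C.Cell → Prop) (N : ℕ) (x : C.Cell) : Prop :=
  ∀ q ≤ N, q ≤ C.dim x → P (C.srcI q x) ∧ P (C.tgtI q x)

namespace FacesSatisfy

variable {C : OmegaCat.{u}} {P : C.Cell → Prop} {N : ℕ}

theorem self {x : C.Cell} (hx : FacesSatisfy C P N x) (hN : C.dim x ≤ N) : P x := by
  simpa only [srcI_of_dim_le le_rfl] using (hx _ hN le_rfl).1

theorem src {x : C.Cell} (hx : FacesSatisfy C P N x) : FacesSatisfy C P N (C.src x) := by
  intro q hqN hq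
  by_cases h0 : C.dim x = 0
  · rw [C.src_dim0 x h0] at hq ⊢
    exact hx q hqN hq
  rw [C.dim_src x h0] at hq
  refine ⟨by rw [srcI_src (by omega)]; exact (hx q hqN (by omega)).1, ?_⟩
  rcases hq.lt_or_eq with hq | rfl
  · rw [tgtI_src (by omega)]; exact (hx q hqN (by omega)).2
  · rw [tgtI_of_dim_le (C.dim_src x h0).le, ← srcI_of_dim_eq_succ (p := C.dim x - 1) (by omega)]
    exact (hx _ hqN (by omega)).1

theorem tgt {x : C.Cell} (hx : FacesSatisfy C P N x) : FacesSatisfy C P N (C.tgt x) := by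
  intro q hqN hq
  by_cases h0 : C.dim x = 0
  · rw [C.tgt_dim0 x h0] at hq ⊢
    exact hx q hqN hq
  rw [C.dim_tgt x h0] at hq
  refine ⟨?_, by rw [tgtI_tgt (by omega)]; exact (hx q hqN (by omega)).2⟩
  rcases hq.lt_or_eq with hq | rfl
  · rw [srcI_tgt (by omega)]; exact (hx q hqN (by omega)).1
  · rw [srcI_of_dim_le (C.dim_tgt x h0).le, ← tgtI_of_dim_eq_succ (p := C.dim x - 1) (by omega)]
    exact (hx _ hqN (by omega)).2

theorem unit (hunit : ∀ x, C.dim x < N → P x → P (C.unit x)) {x : C.Cell}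
    (hx : FacesSatisfy C P N x) : FacesSatisfy C P N (C.unit x) := by
  intro q hqN hq
  rw [C.dim_unit] at hq
  rcases le_or_gt q (C.dim x) with hq | hq
  · rw [srcI_unit hq, tgtI_unit hq]
    exact hx q hqN hq
  · obtain rfl : q = C.dim x + 1 := by omega
    rw [srcI_of_dim_le (C.dim_unit x).le, tgtI_of_dim_le (C.dim_unit x).le]
    have := hunit x (by omega) (hx.self (by omega))
    exact ⟨this, this⟩

theorem comp (hcomp : ∀ p x y, C.Composable p x y → C.dim x ≤ N → P x → P y →
      (∀ i < p, P (C.srcI i y)) → P (C.comp p x y))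
    {p : ℕ} {x y : C.Cell} (h : C.Composable p x y)
    (hx : FacesSatisfy C P N x) (hy : FacesSatisfy C P N y) :
    FacesSatisfy C P N (C.comp p x y) := by
  intro q hqN hq
  rw [C.dim_comp p x y h] at hq
  rcases le_or_gt q p with hqp | hqp
  · rw [srcI_comp_of_le h hqp, tgtI_comp_of_le h hqp]
    exact ⟨(hy q hqN (by rw [h.2.1]; exact hq)).1, (hx q hqN hq).2⟩
  have faces : ∀ i < p, P (C.srcI i y) := fun i hi => by
    simpa only [srcI_of_dim_le le_rfl] using (hy i (by omega) (by rw [h.2.1]; omega)).1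
  rw [srcI_comp_of_lt h hqp, tgtI_comp_of_lt h hqp]
  refine ⟨hcomp p _ _ (composable_srcI h hqp) (by rw [dim_srcI hq]; exact hqN)
    (hx q hqN hq).1 (hy q hqN (by rw [h.2.1]; exact hq)).1 fun i hi => ?_,
    hcomp p _ _ (composable_tgtI h hqp) (by rw [dim_tgtI hq]; exact hqN)
    (hx q hqN hq).2 (hy q hqN (by rw [h.2.1]; exact hq)).2 fun i hi => ?_⟩
  · rw [srcI_srcI (by omega)]; exact faces i hi
  · rw [srcI_tgtI (by omega)]; exact faces i hi

end FacesSatisfy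

end OmegaCat

namespace FreelyGeneratedBy

variable {C : OmegaCat.{u}} {gen : ℕ → Set C.Cell} (hC : FreelyGeneratedBy C gen)
include hC

theorem dim_of_mem {n : ℕ} {a : C.Cell} (ha : a ∈ gen n) : C.dim a = n := hC.1 n a ha

theorem mem_zero {x : C.Cell} (hx : C.dim x = 0) : x ∈ gen 0 := hC.2.1 x hx

theorem exists_extend {D : OmegaCat.{u}} {n : ℕ} (f : PartFunc C D n) (e : C.Cell → D.Cell)
    (he : ∀ a ∈ gen (n + 1), D.dim (e a) = n + 1 ∧
      D.src (e a) = f.map (C.src a) ∧ D.tgt (e a) = f.map (C.tgt a)) :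
    ∃ g : PartFunc C D (n + 1),
      (∀ x, C.dim x ≤ n → g.map x = f.map x) ∧ ∀ a ∈ gen (n + 1), g.map a = e a :=
  (hC.2.2 n D f e he).1

theorem partFunc_ext {D : OmegaCat.{u}} {n : ℕ} {g g' : PartFunc C D n}
    (h : ∀ k ≤ n, ∀ a ∈ gen k, g.map a = g'.map a) {x : C.Cell} (hx : C.dim x ≤ n) :
    g.map x = g'.map x := by
  induction n generalizing x with
  | zero => exact h 0 le_rfl x (hC.mem_zero (by omega))
  | succ n ih =>
    have he : ∀ a ∈ gen (n + 1), D.dim (g.map a) = n + 1 ∧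
        D.src (g.map a) = (g.restrict n.le_succ).map (C.src a) ∧
        D.tgt (g.map a) = (g.restrict n.le_succ).map (C.tgt a) := fun a ha =>
      ⟨by rw [g.map_dim a (hC.dim_of_mem ha).le, hC.dim_of_mem ha],
        (g.map_src a (hC.dim_of_mem ha).le).symm, (g.map_tgt a (hC.dim_of_mem ha).le).symm⟩
    refine (hC.2.2 n D _ g.map he).2 g g' ⟨fun _ _ => rfl, fun _ _ => rfl⟩
      ⟨fun z hz => ?_, fun a ha => (h (n + 1) le_rfl a ha).symm⟩ x hx
    exact ih (g := g'.restrict n.le_succ) (g' := g.restrict n.le_succ)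
      (fun k hk a ha => (h k (by omega) a ha).symm) hz

theorem exists_section_incl {Φ : C.Cell → Prop} (hΦ : IsSubOmegaCat C Φ)
    (hgen : ∀ m, (∀ y, C.dim y < m → Φ y) → ∀ a ∈ gen m, Φ a) (m : ℕ) :
    ∃ P : PartFunc C hΦ.toOmegaCat m, ∀ x, C.dim x ≤ m → (P.map x).1 = x := by
  classical
  have h0 : ∀ x, C.dim x = 0 → Φ x := fun x hx =>
    hgen 0 (fun y hy => absurd hy (Nat.not_lt_zero _)) x (hC.mem_zero hx)
  -- off `Φ` the value is irrelevant; it is a `0`-cell, which lies in `Φ`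
  let lift : C.Cell → Subtype Φ := fun x =>
    if hx : Φ x then ⟨x, hx⟩ else ⟨C.srcI 0 x, h0 _ (dim_srcI (Nat.zero_le _))⟩
  have lift_eq : ∀ {x} (hx : Φ x), lift x = ⟨x, hx⟩ := fun hx => dif_pos hx
  induction m with
  | zero =>
    refine ⟨PartFunc.ofDimZero lift fun x hx => ?_, fun x hx => ?_⟩
    · show C.dim (lift x).1 = 0
      rwa [lift_eq (h0 x hx)]
    · show (lift x).1 = x
      rw [lift_eq (h0 x (by omega))]
  | succ m ih =>
    obtain ⟨P, hP⟩ := ih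
    have hΦm : ∀ y, C.dim y < m + 1 → Φ y := fun y hy => hP y (by omega) ▸ (P.map y).2
    have he : ∀ a ∈ gen (m + 1), hΦ.toOmegaCat.dim (lift a) = m + 1 ∧
        hΦ.toOmegaCat.src (lift a) = P.map (C.src a) ∧
        hΦ.toOmegaCat.tgt (lift a) = P.map (C.tgt a) := by
      intro a ha
      have hda := hC.dim_of_mem ha
      rw [lift_eq (hgen _ hΦm a ha)]
      exact ⟨hda, Subtype.ext (hP (C.src a) (by rw [C.dim_src a (by omega)]; omega)).symm,
        Subtype.ext (hP (C.tgt a) (by rw [C.dim_tgt a (by omega)]; omega)).symm⟩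
    obtain ⟨g, hg, hga⟩ := hC.exists_extend P lift he
    refine ⟨g, fun x hx => hC.partFunc_ext (g := g.postcomp hΦ.incl)
      (g' := (OmegaFunctor.idF C).toPart (m + 1)) (fun k hk a ha => ?_) hx⟩
    show (g.map a).1 = a
    rcases hk.lt_or_eq with hk | rfl
    · rw [hg a (by rw [hC.dim_of_mem ha]; omega), hP a (by rw [hC.dim_of_mem ha]; omega)]
    · rw [hga a ha, lift_eq (hgen _ hΦm a ha)]

theorem induction {Φ : C.Cell → Prop} (hΦ : IsSubOmegaCat C Φ)
    (hgen : ∀ m, (∀ y, C.dim y < m → Φ y) → ∀ a ∈ gen m, Φ a) (x : C.Cell) : Φ x := by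
  obtain ⟨P, hP⟩ := hC.exists_section_incl hΦ hgen (C.dim x)
  exact hP x le_rfl ▸ (P.map x).2

theorem induction_of_dim_le {N : ℕ} {P : C.Cell → Prop}
    (hgen : ∀ k ≤ N, ∀ a ∈ gen k, P a)
    (hunit : ∀ x, C.dim x < N → P x → P (C.unit x))
    (hcomp : ∀ p x y, C.Composable p x y → C.dim x ≤ N → P x → P y →
      (∀ i < p, P (C.srcI i y)) → P (C.comp p x y))
    {x : C.Cell} (hx : C.dim x ≤ N) : P x := by
  refine FacesSatisfy.self (hC.induction (Φ := FacesSatisfy C P N)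
    ⟨fun _ => .src, fun _ => .tgt, fun _ => .unit hunit, fun _ _ _ h => .comp hcomp h⟩
    (fun m hlow a ha q hqN hq => ?_) x) hx
  have hda := hC.dim_of_mem ha
  rcases hq.lt_or_eq with hq | rfl
  · constructor
    · simpa only [srcI_of_dim_le (dim_srcI hq.le).le] using
        (hlow _ (by rw [dim_srcI hq.le]; omega) q hqN (dim_srcI hq.le).ge).1
    · simpa only [srcI_of_dim_le (dim_tgtI hq.le).le] using
        (hlow _ (by rw [dim_tgtI hq.le]; omega) q hqN (dim_tgtI hq.le).ge).1
  · rw [srcI_of_dim_le le_rfl, tgtI_of_dim_le le_rfl]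
    exact ⟨hgen _ (hda ▸ hqN) a (hda ▸ ha), hgen _ (hda ▸ hqN) a (hda ▸ ha)⟩

end FreelyGeneratedBy

theorem Expansion.map_xi_of_mem_gen {C D : OmegaCat.{u}} {G : ℕ → Set C.Cell}
    (hC : FreelyGeneratedBy C G) {E : Expansion C} (ED : Expansion D) {n : ℕ}
    (g : PartFunc C D (n + 1))
    (hgen : ∀ k ≤ n, ∀ a ∈ G k, g.map (E.xi a) = ED.xi (g.map a))
    {x : C.Cell} (hx : C.dim x ≤ n) : g.map (E.xi x) = ED.xi (g.map x) := by
  refine hC.induction_of_dim_le (P := fun x => g.map (E.xi x) = ED.xi (g.map x)) hgen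
    (fun x hx hP => ?_) (fun p x y h hx hPx hPy hfaces => ?_) hx
  · rw [E.xi_unit, g.map_unit _ (by rw [E.dim_xi]; omega), hP, ← ED.xi_unit,
      ← g.map_unit x (by omega)]
  · exact E.map_xi_comp ED g h (by omega) hPy hPx hfaces

/-- A cell of the `n`-fold suspension of the monoid `(ℕ, +)`: there is a single cell in each
dimension `< n`, the `n`-cells are the natural numbers, and all higher cells are units. -/
@[ext]
structure SuspNatCell (n : ℕ) : Type u where
  dim : ℕ
  weight : ℕ
  weight_eq_zero : dim < n → weight = 0

namespace SuspNatCell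

variable {n : ℕ}

-- Named so that the `if`s only appear, with clean decidability instances, once the arguments
-- have been simplified: `split_ifs` then applies.
def cut (n d w : ℕ) : ℕ := if d < n then 0 else w

def compWeight (n p d d' w w' : ℕ) : ℕ := if p < n ∧ d = d' then w + w' else w

def src (z : SuspNatCell.{u} n) : SuspNatCell.{u} n :=
  ⟨z.dim - 1, cut n (z.dim - 1) z.weight, fun h => if_pos h⟩

def unit (z : SuspNatCell.{u} n) : SuspNatCell.{u} n :=
  ⟨z.dim + 1, z.weight, fun h => z.weight_eq_zero (by omega)⟩

def comp (p : ℕ) (z w : SuspNatCell.{u} n) : SuspNatCell.{u} n :=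
  ⟨z.dim, compWeight n p z.dim w.dim z.weight w.weight, fun h => by
    unfold compWeight
    split_ifs with hc
    · rw [z.weight_eq_zero h, w.weight_eq_zero (hc.2 ▸ h)]
    · exact z.weight_eq_zero h⟩

def zero (n d : ℕ) : SuspNatCell.{u} n := ⟨d, 0, fun _ => rfl⟩

theorem cut_weight (z : SuspNatCell.{u} n) : cut n z.dim z.weight = z.weight := by
  unfold cut
  split_ifs with h
  · exact (z.weight_eq_zero h).symm
  · rfl

theorem src_iterate (k : ℕ) (z : SuspNatCell.{u} n) :
    src^[k] z = ⟨z.dim - k, cut n (z.dim - k) z.weight, fun h => if_pos h⟩ := by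
  induction k with
  | zero => ext <;> simp only [Function.iterate_zero_apply, Nat.sub_zero, cut_weight]
  | succ k ih =>
    rw [Function.iterate_succ_apply', ih]
    ext
    · simp only [src]; omega
    · simp only [src, cut]; split_ifs <;> first | rfl | omega

theorem unit_iterate (k : ℕ) (z : SuspNatCell.{u} n) :
    unit^[k] z = ⟨z.dim + k, z.weight, fun h => z.weight_eq_zero (by omega)⟩ := by
  induction k with
  | zero => rfl
  | succ k ih => rw [Function.iterate_succ_apply', ih]; rfl

end SuspNatCell

section SuspNat

open SuspNatCell

abbrev suspNatPre (n : ℕ) : PreOmegaCat.{u} where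
  Cell := SuspNatCell.{u} n
  dim := SuspNatCell.dim
  src := src
  tgt := src
  comp := comp
  unit := unit

theorem SuspNatCell.of_composable {n p : ℕ} {z w : SuspNatCell.{u} n} :
    (suspNatPre n).Composable p z w →
      p < z.dim ∧ w.dim = z.dim ∧ (n ≤ p → z.weight = w.weight) := by
  rintro ⟨hp, hd, hst⟩
  change p < z.dim at hp
  change w.dim = z.dim at hd
  refine ⟨hp, hd, fun hn => ?_⟩
  have := congrArg SuspNatCell.weight hst
  simp only [PreOmegaCat.srcI, PreOmegaCat.tgtI, suspNatPre, SuspNatCell.src_iterate,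
    SuspNatCell.cut] at this
  rwa [if_neg (by omega), if_neg (by omega)] at this

abbrev suspNat (n : ℕ) : OmegaCat.{u} where
  toPreOmegaCat := suspNatPre.{u} n
  dim_src z h := rfl
  dim_tgt z h := rfl
  src_dim0 z h := by
    change z.dim = 0 at h
    ext
    · show z.dim - 1 = z.dim; omega
    · show cut n (z.dim - 1) z.weight = z.weight
      rw [show z.dim - 1 = z.dim by omega, cut_weight]
  tgt_dim0 z h := by
    change z.dim = 0 at h
    ext
    · show z.dim - 1 = z.dim; omega
    · show cut n (z.dim - 1) z.weight = z.weight
      rw [show z.dim - 1 = z.dim by omega, cut_weight]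
  glob_ss z h := rfl
  glob_tt z h := rfl
  dim_unit z := rfl
  src_unit z := by
    ext
    · show z.dim + 1 - 1 = z.dim; omega
    · show cut n (z.dim + 1 - 1) z.weight = z.weight
      rw [Nat.add_sub_cancel, cut_weight]
  tgt_unit z := by
    ext
    · show z.dim + 1 - 1 = z.dim; omega
    · show cut n (z.dim + 1 - 1) z.weight = z.weight
      rw [Nat.add_sub_cancel, cut_weight]
  dim_comp p z w h := rfl
  src_comp_top p z w h htop := by
    obtain ⟨hp, hd, hw⟩ := SuspNatCell.of_composable h
    change z.dim = p + 1 at htop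
    ext
    · show z.dim - 1 = w.dim - 1; omega
    · dsimp only [suspNatPre, src, comp]
      unfold cut compWeight
      split_ifs <;> omega
  tgt_comp_top p z w h htop := by
    obtain ⟨hp, hd, hw⟩ := SuspNatCell.of_composable h
    change z.dim = p + 1 at htop
    ext
    · rfl
    · dsimp only [suspNatPre, src, comp]
      unfold cut compWeight
      split_ifs <;> omega
  src_comp p z w h hlt := by
    obtain ⟨hp, hd, hw⟩ := SuspNatCell.of_composable h
    change p + 1 < z.dim at hlt
    ext
    · rfl
    · dsimp only [suspNatPre, src, comp]
      unfold cut compWeight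
      split_ifs <;> omega
  tgt_comp p z w h hlt := by
    obtain ⟨hp, hd, hw⟩ := SuspNatCell.of_composable h
    change p + 1 < z.dim at hlt
    ext
    · rfl
    · dsimp only [suspNatPre, src, comp]
      unfold cut compWeight
      split_ifs <;> omega
  comp_assoc p x y z h1 h2 := by
    obtain ⟨-, hd1, -⟩ := SuspNatCell.of_composable h1
    obtain ⟨-, hd2, -⟩ := SuspNatCell.of_composable h2
    ext
    · rfl
    · dsimp only [suspNatPre, comp]
      unfold compWeight
      split_ifs <;> omega
  comp_unit_src p z h := by
    change p < z.dim at h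
    have := z.weight_eq_zero
    ext
    · rfl
    · simp only [suspNatPre, comp, PreOmegaCat.srcI, src_iterate, unit_iterate]
      unfold cut compWeight
      split_ifs <;> omega
  comp_unit_tgt p z h := by
    change p < z.dim at h
    have := z.weight_eq_zero
    ext
    · simp only [suspNatPre, comp, PreOmegaCat.tgtI, src_iterate, unit_iterate]; omega
    · simp only [suspNatPre, comp, PreOmegaCat.tgtI, src_iterate, unit_iterate]
      unfold cut compWeight
      split_ifs <;> omega
  interchange p q x y x' y' hqp h1 h2 h3 h4 := by
    obtain ⟨-, hd1, -⟩ := SuspNatCell.of_composable h1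
    obtain ⟨-, hd2, -⟩ := SuspNatCell.of_composable h2
    obtain ⟨-, hd3, -⟩ := SuspNatCell.of_composable h3
    ext
    · rfl
    · dsimp only [suspNatPre, comp]
      unfold compWeight
      split_ifs <;> omega
  unit_comp p z w h := by
    ext
    · rfl
    · dsimp only [suspNatPre, comp, unit]
      unfold compWeight
      split_ifs <;> omega

namespace SuspNatCell

def ofWeight (n k : ℕ) : SuspNatCell.{u} n := ⟨n, k, fun h => absurd h (lt_irrefl n)⟩

variable {n : ℕ}

theorem unit_iterate_zero (k d : ℕ) : (suspNat.{u} n).unit^[k] (zero n d) = zero n (d + k) := by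
  rw [show (suspNat.{u} n).unit = unit from rfl, unit_iterate]; rfl

theorem comp_zero (p d : ℕ) : (suspNat.{u} n).comp p (zero n d) (zero n d) = zero n d := by
  ext
  · rfl
  · show compWeight n p d d 0 0 = 0
    unfold compWeight
    split_ifs <;> rfl

theorem foldComp_zero {w : SuspNatCell.{u} n} (hw : w.dim = n) {s : ℕ → SuspNatCell.{u} n}
    {k : ℕ} (hk : k ≤ n) (hs : ∀ i < k, s i = zero n (i + 1)) :
    (suspNat.{u} n).foldComp w s k = w := by
  induction k with
  | zero => rfl
  | succ k ih =>
    rw [PreOmegaCat.foldComp, ih (by omega) fun i hi => hs i (by omega),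
      mcomp_of_dim_le (by show (s k).dim ≤ w.dim; rw [hs k k.lt_succ_self, hw]; exact hk),
      hs k k.lt_succ_self, unit_iterate_zero]
    ext
    · rfl
    · show compWeight n k w.dim (k + 1 + (w.dim - (k + 1))) w.weight 0 = w.weight
      unfold compWeight
      split_ifs <;> rfl

end SuspNatCell

def OmegaCat.toSuspNatZero (C : OmegaCat.{u}) (n : ℕ) : OmegaFunctor C (suspNat.{u} n) where
  map x := zero n (C.dim x)
  map_dim _ := rfl
  map_src x := by
    ext
    · show C.dim (C.src x) = C.dim x - 1
      by_cases h0 : C.dim x = 0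
      · rw [C.src_dim0 x h0, h0]
      · exact C.dim_src x h0
    · show 0 = cut n (C.dim x - 1) 0
      unfold cut; split_ifs <;> rfl
  map_tgt x := by
    ext
    · show C.dim (C.tgt x) = C.dim x - 1
      by_cases h0 : C.dim x = 0
      · rw [C.tgt_dim0 x h0, h0]
      · exact C.dim_tgt x h0
    · show 0 = cut n (C.dim x - 1) 0
      unfold cut; split_ifs <;> rfl
  map_comp p x y h := by
    rw [C.dim_comp p x y h, ← h.2.1, comp_zero]
  map_unit x := by rw [C.dim_unit]; rfl

namespace FreelyGeneratedBy

variable {C : OmegaCat.{u}} {gen : ℕ → Set C.Cell} (hC : FreelyGeneratedBy C gen)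
include hC

theorem exists_weighting (n : ℕ) (w : C.Cell → ℕ) :
    ∃ g : PartFunc C (suspNat.{u} (n + 1)) (n + 1),
      (∀ x, C.dim x ≤ n → g.map x = zero (n + 1) (C.dim x)) ∧
      ∀ a ∈ gen (n + 1), g.map a = ofWeight (n + 1) (w a) := by
  refine hC.exists_extend ((C.toSuspNatZero (n + 1)).toPart n) (fun a => ofWeight (n + 1) (w a))
    fun a ha => ⟨rfl, ?_, ?_⟩
  all_goals
    have hda := hC.dim_of_mem ha
    ext
    · show n + 1 - 1 = C.dim _
      first | rw [C.dim_src a (by omega)] | rw [C.dim_tgt a (by omega)]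
      omega
    · show cut (n + 1) (n + 1 - 1) (w a) = 0
      unfold cut; rw [if_pos (by omega)]

theorem ne_unit {n : ℕ} {a : C.Cell} (ha : a ∈ gen (n + 1)) (x : C.Cell) : a ≠ C.unit x := by
  rintro rfl
  obtain ⟨g, hg, hga⟩ := hC.exists_weighting n fun _ => 1
  have hx : C.dim x = n := by have := hC.dim_of_mem ha; rw [C.dim_unit] at this; omega
  have := congrArg SuspNatCell.weight <|
    (hga _ ha).symm.trans ((g.map_unit x (by omega)).trans (by rw [hg x hx.le]))
  exact absurd this (by show 1 ≠ 0; omega)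

end FreelyGeneratedBy

end SuspNat

section ExpandedGens

open SuspNatCell

variable {C C' : OmegaCat.{u}} {gen : ℕ → Set C.Cell} {E : Expansion C'}
  {ι : OmegaFunctor C C'}

theorem iota_mem_expandedGens {k : ℕ} {a : C.Cell} (ha : a ∈ gen k) :
    ι.map a ∈ expandedGens C C' E ι gen k := by
  cases k <;> exact Or.inl ⟨a, ha, rfl⟩

theorem xi_iota_mem_expandedGens {k : ℕ} {a : C.Cell} (ha : a ∈ gen k) :
    E.xi (ι.map a) ∈ expandedGens C C' E ι gen (k + 1) :=
  Or.inr ⟨ι.map a, ⟨a, ha, rfl⟩, rfl⟩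

theorem map_xi_iota_eq_zero (hC : FreelyGeneratedBy C gen) {m : ℕ}
    {g : PartFunc C' (suspNat.{u} (m + 1)) (m + 1)}
    (hlow : ∀ z, C'.dim z ≤ m → g.map z = zero (m + 1) (C'.dim z))
    (hgen : ∀ a ∈ gen m, g.map (E.xi (ι.map a)) = zero (m + 1) (m + 1))
    {x : C.Cell} (hx : C.dim x ≤ m) : g.map (E.xi (ι.map x)) = zero (m + 1) (C.dim x + 1) := by
  refine hC.induction_of_dim_le
    (P := fun x => g.map (E.xi (ι.map x)) = zero (m + 1) (C.dim x + 1))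
    (fun k hk a ha => ?_) (fun x hx hP => ?_)
    (fun p x y h hx hPx hPy _ => ?_) hx
  · rw [hC.dim_of_mem ha]
    rcases hk.lt_or_eq with hk | rfl
    · rw [hlow _ (by rw [E.dim_xi, ι.map_dim, hC.dim_of_mem ha]; omega), E.dim_xi, ι.map_dim,
        hC.dim_of_mem ha]
    · exact hgen a ha
  · rw [ι.map_unit, E.xi_unit, g.map_unit _ (by rw [E.dim_xi, ι.map_dim]; omega), hP,
      C.dim_unit]
    rfl
  · have h' := ι.map_composable h
    have hA : C'.dim (E.compPrefix p (ι.map x) (ι.map y)) = p + 1 :=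
      Expansion.dim_compPrefix h'
    rw [ι.map_comp p x y h, Expansion.map_xi_comp_eq g h' (by rw [ι.map_dim]; omega),
      hlow _ (by rw [hA]; have := h.1; omega), hA, hPx, hPy, unit_iterate_zero, ι.map_dim,
      h.2.1, show p + 1 + (C.dim x - p) = C.dim x + 1 by have := h.1; omega, comp_zero,
      comp_zero, C.dim_comp p x y h]

variable (hC : FreelyGeneratedBy C gen) (hC' : FreelyGeneratedBy C' (expandedGens C C' E ι gen))
include hC hC'

theorem iota_ne_orig (c : C.Cell) : ι.map c ≠ E.orig := by
  intro h
  have hc : C.dim c = 0 := by rw [← ι.map_dim, h, E.dim_orig]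
  have := xi_iota_mem_expandedGens (E := E) (ι := ι) (hC.mem_zero hc)
  rw [h, E.xi_orig] at this
  exact hC'.ne_unit this E.orig rfl

theorem iota_ne_xi_iota (x y : C.Cell) : ι.map x ≠ E.xi (ι.map y) := by
  induction hx : C.dim x using Nat.strong_induction_on generalizing x y with
  | _ n ih =>
  intro h
  have hdim : C.dim x = C.dim y + 1 := by
    simpa only [ι.map_dim, E.dim_xi] using congrArg C'.dim h
  have hsrc := congrArg C'.src h
  rw [← ι.map_src] at hsrc
  by_cases h0 : C.dim y = 0
  · rw [E.xi_src0 _ (by rwa [ι.map_dim])] at hsrc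
    exact iota_ne_orig hC hC' _ hsrc
  · rw [E.xi_src _ (by rwa [ι.map_dim]), ← ι.map_tgt] at hsrc
    exact ih _ (by rw [← hx, C.dim_src x (by omega)]; omega) _ _ rfl hsrc

theorem xi_iota_injOn (hι : Function.Injective ι.map) {n : ℕ} {b b' : C.Cell}
    (hb : b ∈ gen n) (hb' : b' ∈ gen n) (h : E.xi (ι.map b) = E.xi (ι.map b')) : b = b' := by
  classical
  cases n with
  | zero =>
    have htgt : ∀ c ∈ gen 0, C'.tgt (E.xi (ι.map c)) = ι.map c := fun c hc => by
      rw [E.xi_tgt, ι.map_dim, hC.dim_of_mem hc]; rfl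
    exact hι ((htgt b hb).symm.trans ((congrArg C'.tgt h).trans (htgt b' hb')))
  | succ m =>
    -- weigh `ι b` by one and every other generator by zero; `t ξ_{ι c}` has the weight of `ι c`
    obtain ⟨g, hlow, hgen⟩ := hC'.exists_weighting m fun z => if z = ι.map b then 1 else 0
    have hzero := fun x (hx : C.dim x ≤ m) => map_xi_iota_eq_zero hC hlow (fun a ha => by
      rw [hgen _ (xi_iota_mem_expandedGens ha), if_neg (iota_ne_xi_iota hC hC' _ _).symm]; rfl) hx
    have key : ∀ c ∈ gen (m + 1), g.map (C'.tgt (E.xi (ι.map c))) = g.map (ι.map c) := by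
      intro c hc
      have hdc : C'.dim (ι.map c) = m + 1 := by rw [ι.map_dim, hC.dim_of_mem hc]
      rw [E.xi_tgt, (E.foldComposable_xi _).map_foldComp g hdc.le]
      refine foldComp_zero ((g.map_dim _ hdc.le).trans hdc) hdc.le fun i hi => ?_
      have hi' : C.dim (C.srcI i c) = i := dim_srcI (by rw [hC.dim_of_mem hc]; omega)
      rw [← ι.map_srcI, hzero (C.srcI i c) (by omega), hi']
    have hw := congrArg SuspNatCell.weight <|
      (key b hb).symm.trans ((congrArg (fun z => g.map (C'.tgt z)) h).trans (key b' hb'))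
    rw [hgen _ (iota_mem_expandedGens hb), hgen _ (iota_mem_expandedGens hb')] at hw
    by_contra hne
    rw [if_pos rfl, if_neg fun h' => hne (hι h').symm] at hw
    exact absurd hw one_ne_zero

end ExpandedGens

section Extension

variable {C C' D : OmegaCat.{u}} {gen : ℕ → Set C.Cell} {ι : OmegaFunctor C C'}
  {f : OmegaFunctor C D} {E : Expansion C'} {ED : Expansion D}

variable (ι f E ED) in
structure IsExpExtension {n : ℕ} (g : PartFunc C' D n) : Prop where
  map_iota : ∀ x, C.dim x ≤ n → g.map (ι.map x) = f.map x
  map_orig : g.map E.orig = ED.orig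
  map_xi : ∀ x, C'.dim x + 1 ≤ n → g.map (E.xi x) = ED.xi (g.map x)

theorem OmegaFunctor.isExpExtension_toPart {g : OmegaFunctor C' D}
    (hι : ∀ x, g.map (ι.map x) = f.map x) (horig : g.map E.orig = ED.orig)
    (hxi : ∀ x, g.map (E.xi x) = ED.xi (g.map x)) (n : ℕ) :
    IsExpExtension ι f E ED (g.toPart n) :=
  ⟨fun x _ => hι x, horig, fun x _ => hxi x⟩

namespace IsExpExtension

variable {n : ℕ} {g : PartFunc C' D n}

theorem src_xi_map (hg : IsExpExtension ι f E ED g) {z : C'.Cell} (hz : C'.dim z = n) :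
    D.src (ED.xi (g.map z)) = g.map (C'.src (E.xi z)) := by
  have hgz : D.dim (g.map z) = n := (g.map_dim z hz.le).trans hz
  by_cases h0 : n = 0
  · rw [ED.xi_src0 _ (hgz.trans h0), E.xi_src0 _ (hz.trans h0), hg.map_orig]
  · rw [ED.xi_src _ (by omega), E.xi_src _ (by omega), ← g.map_tgt _ hz.le,
      hg.map_xi _ (by rw [C'.dim_tgt z (by omega)]; omega)]

theorem tgt_xi_map (hg : IsExpExtension ι f E ED g) {z : C'.Cell} (hz : C'.dim z = n) :
    D.tgt (ED.xi (g.map z)) = g.map (C'.tgt (E.xi z)) := by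
  rw [ED.xi_tgt, E.xi_tgt, (E.foldComposable_xi z).map_foldComp g hz.le,
    g.map_dim z hz.le]
  refine foldComp_congr fun i hi => ?_
  rw [hg.map_xi _ (by rw [dim_srcI hi.le]; omega), g.map_srcI i hz.le]

end IsExpExtension

variable (hC : FreelyGeneratedBy C gen) (hC' : FreelyGeneratedBy C' (expandedGens C C' E ι gen))
include hC hC'

theorem IsExpExtension.map_eq {n₁ n₂ : ℕ} {g₁ : PartFunc C' D n₁} {g₂ : PartFunc C' D n₂}
    (h₁ : IsExpExtension ι f E ED g₁) (h₂ : IsExpExtension ι f E ED g₂) {x : C'.Cell}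
    (hx₁ : C'.dim x ≤ n₁) (hx₂ : C'.dim x ≤ n₂) : g₁.map x = g₂.map x := by
  refine hC'.partFunc_ext (g := g₁.restrict (min_le_left n₁ n₂))
    (g' := g₂.restrict (min_le_right n₁ n₂)) (fun k hk a ha => ?_) (le_min hx₁ hx₂)
  show g₁.map a = g₂.map a
  have hk₁ := hk.trans (min_le_left n₁ n₂)
  have hk₂ := hk.trans (min_le_right n₁ n₂)
  cases k with
  | zero =>
    rcases ha with ⟨c, hc, rfl⟩ | rfl
    · rw [h₁.map_iota c (by rw [hC.dim_of_mem hc]; omega),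
        h₂.map_iota c (by rw [hC.dim_of_mem hc]; omega)]
    · rw [h₁.map_orig, h₂.map_orig]
  | succ m =>
    rcases ha with ⟨c, hc, rfl⟩ | ⟨_, ⟨b, hb, rfl⟩, rfl⟩
    · rw [h₁.map_iota c (by rw [hC.dim_of_mem hc]; omega),
        h₂.map_iota c (by rw [hC.dim_of_mem hc]; omega)]
    · have hdb : C'.dim (ι.map b) = m := by rw [ι.map_dim, hC.dim_of_mem hb]
      rw [h₁.map_xi _ (by omega), h₂.map_xi _ (by omega),
        h₁.map_iota b (by rw [hC.dim_of_mem hb]; omega),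
        h₂.map_iota b (by rw [hC.dim_of_mem hb]; omega)]

theorem IsExpExtension.succ {n : ℕ} {g : PartFunc C' D n} {g' : PartFunc C' D (n + 1)}
    (hg : IsExpExtension ι f E ED g) (hg'g : ∀ x, C'.dim x ≤ n → g'.map x = g.map x)
    (hg'ι : ∀ a ∈ gen (n + 1), g'.map (ι.map a) = f.map a)
    (hg'ξ : ∀ b ∈ gen n, g'.map (E.xi (ι.map b)) = ED.xi (g.map (ι.map b))) :
    IsExpExtension ι f E ED g' := by
  have hxi_iota : ∀ k ≤ n, ∀ c ∈ gen k, g'.map (E.xi (ι.map c)) = ED.xi (g'.map (ι.map c)) := by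
    intro k hk c hc
    have hdc : C'.dim (ι.map c) = k := by rw [ι.map_dim, hC.dim_of_mem hc]
    rw [hg'g (ι.map c) (by omega)]
    rcases hk.lt_or_eq with hk | rfl
    · rw [hg'g _ (by rw [E.dim_xi]; omega), hg.map_xi _ (by omega)]
    · exact hg'ξ c hc
  refine ⟨fun x hx => ?_, (hg'g _ (by rw [E.dim_orig]; omega)).trans hg.map_orig,
    fun x hx => Expansion.map_xi_of_mem_gen hC' ED g' (fun k hk a ha => ?_) (by omega)⟩
  · refine hC.partFunc_ext (g := g'.precomp ι) (g' := f.toPart (n + 1)) (fun k hk a ha => ?_) hx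
    show g'.map (ι.map a) = f.map a
    rcases hk.lt_or_eq with hk | rfl
    · rw [hg'g _ (by rw [ι.map_dim, hC.dim_of_mem ha]; omega),
        hg.map_iota a (by rw [hC.dim_of_mem ha]; omega)]
    · exact hg'ι a ha
  · cases k with
    | zero =>
      rcases ha with ⟨c, hc, rfl⟩ | rfl
      · exact hxi_iota 0 hk c hc
      · rw [E.xi_orig, g'.map_unit _ (by rw [E.dim_orig]; omega),
          hg'g _ (by rw [E.dim_orig]; omega), hg.map_orig, ED.xi_orig]
    | succ m =>
      rcases ha with ⟨c, hc, rfl⟩ | ⟨_, ⟨b, hb, rfl⟩, rfl⟩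
      · exact hxi_iota _ hk c hc
      · rw [E.xi_xi, g'.map_unit _ (by rw [E.dim_xi, ι.map_dim, hC.dim_of_mem hb]; omega),
          hxi_iota m (by omega) b hb, ED.xi_xi]

variable (hι : Function.Injective ι.map)
include hι

theorem exists_isExpExtension_zero : ∃ g : PartFunc C' D 0, IsExpExtension ι f E ED g := by
  classical
  let m := Function.extend ι.map f.map fun _ => ED.orig
  have hm_iota : ∀ c, m (ι.map c) = f.map c := hι.extend_apply _ _
  have hm_orig : m E.orig = ED.orig :=
    Function.extend_apply' _ _ _ fun ⟨c, hc⟩ => iota_ne_orig hC hC' c hc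
  refine ⟨PartFunc.ofDimZero m fun z hz => ?_, fun x _ => hm_iota x, hm_orig,
    fun x hx => absurd hx (by omega)⟩
  rcases hC'.mem_zero hz with ⟨c, hc, rfl⟩ | rfl
  · rw [hm_iota, f.map_dim, hC.dim_of_mem hc]
  · rw [hm_orig, ED.dim_orig]

theorem exists_generator_values {n : ℕ} (g : PartFunc C' D n) :
    ∃ e : C'.Cell → D.Cell, (∀ b ∈ gen n, e (E.xi (ι.map b)) = ED.xi (g.map (ι.map b))) ∧
      ∀ a ∈ gen (n + 1), e (ι.map a) = f.map a := by
  classical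
  refine ⟨Function.extend (fun b : gen n => E.xi (ι.map b)) (fun b => ED.xi (g.map (ι.map b)))
    (Function.extend (fun a : gen (n + 1) => ι.map a) (fun a => f.map a) g.map),
    fun b hb => ?_, fun a ha => ?_⟩
  · exact Function.Injective.extend_apply
      (fun b₁ b₂ h => Subtype.ext (xi_iota_injOn hC hC' hι b₁.2 b₂.2 h)) _ _ (⟨b, hb⟩ : gen n)
  · rw [Function.extend_apply' _ _ _ fun ⟨b, hb⟩ => iota_ne_xi_iota hC hC' a b.1 hb.symm]
    exact Function.Injective.extend_apply (fun a₁ a₂ h => Subtype.ext (hι h)) _ _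
      (⟨a, ha⟩ : gen (n + 1))

theorem IsExpExtension.exists_succ {n : ℕ} {g : PartFunc C' D n}
    (hg : IsExpExtension ι f E ED g) :
    ∃ g' : PartFunc C' D (n + 1), IsExpExtension ι f E ED g' := by
  obtain ⟨e, he_xi, he_iota⟩ := exists_generator_values (f := f) (ED := ED) hC hC' hι g
  obtain ⟨g', hg'g, hg'e⟩ := hC'.exists_extend g e <| by
    rintro _ (⟨a, ha, rfl⟩ | ⟨_, ⟨b, hb, rfl⟩, rfl⟩)
    · have hda := hC.dim_of_mem ha
      rw [he_iota a ha, ← f.map_src, ← f.map_tgt,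
        ← hg.map_iota (C.src a) (by rw [C.dim_src a (by omega)]; omega),
        ← hg.map_iota (C.tgt a) (by rw [C.dim_tgt a (by omega)]; omega), ι.map_src, ι.map_tgt,
        f.map_dim, hda]
      exact ⟨rfl, rfl, rfl⟩
    · have hdb : C'.dim (ι.map b) = n := by rw [ι.map_dim, hC.dim_of_mem hb]
      rw [he_xi b hb, ED.dim_xi, g.map_dim _ hdb.le, hdb]
      exact ⟨rfl, hg.src_xi_map hdb, hg.tgt_xi_map hdb⟩
  exact ⟨g', hg.succ hC hC' hg'g
    (fun a ha => (hg'e _ (iota_mem_expandedGens ha)).trans (he_iota a ha))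
    (fun b hb => (hg'e _ (xi_iota_mem_expandedGens hb)).trans (he_xi b hb))⟩

theorem exists_isExpExtension (n : ℕ) : ∃ g : PartFunc C' D n, IsExpExtension ι f E ED g := by
  induction n with
  | zero => exact exists_isExpExtension_zero hC hC' hι
  | succ n ih => exact ih.elim fun g hg => hg.exists_succ hC hC' hι

end Extension

def IsFreeExpansion (C : OmegaCat.{u}) (X : ExpCatObj.{u}) (η : OmegaFunctor C X.cat) : Prop :=
  ∀ (D : OmegaCat.{u}) (ED : Expansion D) (f : OmegaFunctor C D),
    ∃! g : OmegaFunctor X.cat D,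
      (∀ x, g.map (η.map x) = f.map x) ∧ g.map X.exp.orig = ED.orig ∧
        ∀ x, g.map (X.exp.xi x) = ED.xi (g.map x)

theorem isFreeExpansion_expandedGens {C C' : OmegaCat.{u}} {gen : ℕ → Set C.Cell}
    {E : Expansion C'} {ι : OmegaFunctor C C'} (hC : FreelyGeneratedBy C gen)
    (hC' : FreelyGeneratedBy C' (expandedGens C C' E ι gen)) (hι : Function.Injective ι.map) :
    IsFreeExpansion C ⟨C', E⟩ ι := by
  intro D ED f
  choose G hG using exists_isExpExtension (f := f) (ED := ED) hC hC' hι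
  have hcompat : ∀ n x, C'.dim x ≤ n → (G n).map x = (G (C'.dim x)).map x :=
    fun n x hx => (hG n).map_eq hC hC' (hG _) hx le_rfl
  refine ⟨PartFunc.glue G hcompat, ⟨fun x => ?_, ?_, fun x => ?_⟩, ?_⟩
  · rw [PartFunc.glue_map G hcompat (n := C.dim x) (by rw [ι.map_dim])]
    exact (hG _).map_iota x le_rfl
  · rw [PartFunc.glue_map G hcompat (n := 0) (by rw [E.dim_orig])]
    exact (hG 0).map_orig
  · rw [PartFunc.glue_map G hcompat (n := C'.dim x + 1) (by rw [E.dim_xi]),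
      PartFunc.glue_map G hcompat (n := C'.dim x + 1) (Nat.le_succ _)]
    exact (hG _).map_xi x le_rfl
  · rintro g ⟨hgι, hgo, hgξ⟩
    ext x
    rw [PartFunc.glue_map G hcompat le_rfl]
    exact (OmegaFunctor.isExpExtension_toPart hgι hgo hgξ (C'.dim x)).map_eq hC hC' (hG _)
      le_rfl le_rfl

namespace IsFreeExpansion

variable {C : OmegaCat.{u}} {X : ExpCatObj.{u}} {η : OmegaFunctor C X.cat}

open Limits in
def isInitial (h : IsFreeExpansion C X η) :
    IsInitial (StructuredArrow.mk (T := forgetExp) (η : C ⟶ forgetExp.obj X)) := by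
  choose g hg huniq using fun A : StructuredArrow C forgetExp => h A.right.cat A.right.exp A.hom
  refine IsInitial.ofUniqueHom
    (fun A => StructuredArrow.homMk ⟨g A, (hg A).2.1, (hg A).2.2⟩
      (OmegaFunctor.ext (funext (hg A).1)))
    fun A m => StructuredArrow.ext _ _ (ExpHom.ext (huniq A m.right.func
      ⟨fun x => congrArg (fun k => homMap k x) (StructuredArrow.w m), m.right.map_orig,
        m.right.map_xi⟩))

def isoLeftAdjointObj (h : IsFreeExpansion C X η) {F : OmegaCat.{u} ⥤ ExpCatObj.{u}}
    (adj : F ⊣ forgetExp) : F.obj C ≅ X :=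
  (StructuredArrow.proj C forgetExp).mapIso
    ((mkInitialOfLeftAdjoint forgetExp adj C).uniqueUpToIso h.isInitial)

end IsFreeExpansion

/-- **Statement 5** (the free expansion on a polygraph).
Let `C = S*` be the free ω-category on a polygraph `gen`, and let `C' = E(S)*`
be the free ω-category on the polygraph `E(S)` (given by the generators of `S`,
the origin, and the cells `ξ_a` for `a` a generator of `S`), with its canonical
origin and expansion `E` and the inclusion `ι : C → C'`. Then `(C', E)` is the
value at `C` of the left adjoint to the forgetful functor `U : Exp → ωCat`:
for every ω-category with expansion `(D, ED)` and every ω-functor `f : C → D`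
there is a unique morphism of ω-categories with expansion `g : (C', E) → (D, ED)`
with `g ∘ ι = f`; consequently, for any left adjoint `F` of `forgetExp`, the
expansion monad takes `C = S*` to `C' = E(S)*`. -/
theorem statement5 (C : OmegaCat.{u}) (gen : ℕ → Set C.Cell)
    (hC : FreelyGeneratedBy C gen)
    (C' : OmegaCat.{u}) (E : Expansion C') (ι : OmegaFunctor C C')
    (hι : Function.Injective ι.map)
    (hC' : FreelyGeneratedBy C' (expandedGens C C' E ι gen)) :
    (∀ (D : OmegaCat.{u}) (ED : Expansion D) (f : OmegaFunctor C D),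
      ∃! g : OmegaFunctor C' D,
        (∀ x, g.map (ι.map x) = f.map x) ∧
        g.map E.orig = ED.orig ∧
        (∀ x, g.map (E.xi x) = ED.xi (g.map x))) ∧
    (∀ (F : OmegaCat.{u} ⥤ ExpCatObj.{u}) (adj : F ⊣ forgetExp),
      Nonempty (F.obj C ≅ ExpCatObj.mk C' E)) := by
  have hfree := isFreeExpansion_expandedGens hC hC' hι
  exact ⟨hfree, fun F adj => ⟨hfree.isoLeftAdjointObj adj⟩⟩

end Orientals

end
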